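/- arXiv:1405.6883 — 4 statements merged into one kernel-verified Lean document; each statement's English description precedes it below -/
import Mathlib

section
/- For every η > 0 and every s ≥ 0 one has |g(s) − g^{(η)}(s)| ≤ η², where g^{(η)} is defined as g but with the boundary condition β(0) = β(1) = 1−η in place of β(0) = β(1) = 1. -/
open MeasureTheory Set Filter Topology

/-- A pair of `H¹` functions on the interval `(0,T)`, described through their
absolutely continuous representatives `a`, `b` together with their
square-integrable weak derivatives `da`, `db`. -/
structure H1Pair (T : ℝ) where
  a : ℝ → ℝ
  b : ℝ → ℝ
  da : ℝ → ℝ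
  db : ℝ → ℝ
  da_mem : MeasureTheory.MemLp da 2 (MeasureTheory.volume.restrict (Set.Ioo (0:ℝ) T))
  db_mem : MeasureTheory.MemLp db 2 (MeasureTheory.volume.restrict (Set.Ioo (0:ℝ) T))
  a_ftc : ∀ x ∈ Set.Icc (0:ℝ) T, a x = a 0 + ∫ t in Set.Ioc (0:ℝ) x, da t
  b_ftc : ∀ x ∈ Set.Icc (0:ℝ) T, b x = b 0 + ∫ t in Set.Ioc (0:ℝ) x, db t

/-- Membership in the admissible class `U_s(0,T)`: `0 ≤ β ≤ 1`, `α(0)=0`, `α(T)=s`,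
`β(0)=β(T)=1`. -/
def H1Pair.Admissible {T : ℝ} (s : ℝ) (P : H1Pair T) : Prop :=
  (∀ t ∈ Set.Icc (0:ℝ) T, P.b t ∈ Set.Icc (0:ℝ) 1) ∧
  P.a 0 = 0 ∧ P.a T = s ∧ P.b 0 = 1 ∧ P.b T = 1

/-- The continuous extension of `x ↦ (1 - x) * f x` to `[0,1]`, with value `l` at `1`. -/
noncomputable def damageExt (f : ℝ → ℝ) (l : ℝ) (x : ℝ) : ℝ :=
  if x = 1 then l else (1 - x) * f x

/-- The surface energy of a pair: `∫₀¹ |1-β| √(f(β)² |α'|² + |β'|²) dt`, written as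
`∫₀¹ √(((1-β) f(β))² |α'|² + (1-β)² |β'|²) dt`, where at points with `β = 1` the
product `(1-β) f(β)` is interpreted as `l`. -/
noncomputable def surfEnergy (f : ℝ → ℝ) (l : ℝ) (P : H1Pair 1) : ENNReal :=
  ∫⁻ t in Set.Ioo (0:ℝ) 1,
    ENNReal.ofReal (Real.sqrt ((damageExt f l (P.b t))^2 * (P.da t)^2
      + (1 - P.b t)^2 * (P.db t)^2))

/-- The surface energy density `g(s)`. -/
noncomputable def surfDensity (f : ℝ → ℝ) (l : ℝ) (s : ℝ) : ℝ :=
  (⨅ (P : H1Pair 1) (_ : P.Admissible s), surfEnergy f l P).toReal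

/-- `f` is an admissible damage function with limit value `l`: it is continuous,
nondecreasing and nonnegative on `[0,1)`, vanishes exactly at `0`, `l ∈ (0,∞)`, and
`(1-s) f(s) → l` as `s → 1⁻`. -/
def AdmissibleDamage (f : ℝ → ℝ) (l : ℝ) : Prop :=
  ContinuousOn f (Set.Ico 0 1) ∧
  MonotoneOn f (Set.Ico 0 1) ∧
  (∀ x ∈ Set.Ico (0:ℝ) 1, 0 ≤ f x) ∧
  (∀ x ∈ Set.Ico (0:ℝ) 1, (f x = 0 ↔ x = 0)) ∧
  0 < l ∧
  Filter.Tendsto (fun x => (1 - x) * f x) (nhdsWithin 1 (Set.Iio 1)) (nhds l)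

/-- The admissible class `U_s^{(η)}`: pairs in `H¹((0,1))` with `0 ≤ β ≤ 1`,
`α(0) = 0`, `α(1) = s`, and boundary value `β(0) = β(1) = c` (with `c = 1 - η`). -/
def H1Pair.AdmissibleBV (s c : ℝ) (P : H1Pair 1) : Prop :=
  (∀ t ∈ Set.Icc (0:ℝ) 1, P.b t ∈ Set.Icc (0:ℝ) 1) ∧
  P.a 0 = 0 ∧ P.a 1 = s ∧ P.b 0 = c ∧ P.b 1 = c

/-- The surface energy density `g^{(η)}`, defined as `g` but with boundary condition
`β(0) = β(1) = 1 − η`. -/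
noncomputable def surfDensityBV (f : ℝ → ℝ) (l : ℝ) (η s : ℝ) : ℝ :=
  (⨅ (P : H1Pair 1) (_ : P.AdmissibleBV s (1 - η)), surfEnergy f l P).toReal

namespace SurfAux

instance : IsFiniteMeasure (volume.restrict (Set.Ioo (0:ℝ) 1)) :=
  ⟨by simp [Real.volume_Ioo]⟩

noncomputable def φ : ℝ → ℝ := fun t => 2 * t - 2⁻¹

lemma φ_meas : Measurable φ := by unfold φ; fun_prop

lemma map_φ_volume : Measure.map φ volume = ENNReal.ofReal 2⁻¹ • volume := by
  have h : φ = (fun x : ℝ => x + -2⁻¹) ∘ (fun x : ℝ => (2:ℝ) * x) := by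
    funext t; simp [φ]; ring
  rw [h, ← Measure.map_map (by fun_prop) (by fun_prop),
    Real.map_volume_mul_left (two_ne_zero), Measure.map_smul,
    map_add_right_eq_self volume (-2⁻¹)]
  norm_num [abs_of_nonneg]

lemma map_φ_restrict {S : Set ℝ} (hS : MeasurableSet S) :
    Measure.map φ (volume.restrict (φ ⁻¹' S)) = ENNReal.ofReal 2⁻¹ • volume.restrict S := by
  rw [← Measure.restrict_map φ_meas hS, map_φ_volume, Measure.restrict_smul]

lemma half_le (S : Set ℝ) :
    (ENNReal.ofReal 2⁻¹ • volume.restrict S) ≤ volume.restrict S := by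
  intro s
  simp only [Measure.smul_apply, smul_eq_mul]
  exact mul_le_of_le_one_left (by positivity) (by simp)

lemma integral_affine (u v A B : ℝ) : ∫ t in u..v, (A + B * t) = A * (v - u) + B * (v^2 - u^2) / 2 := by
  have : ∫ t in u..v, (A + B * t) = (∫ _t in u..v, A) + ∫ t in u..v, B * t :=
    intervalIntegral.integral_add (intervalIntegrable_const)
      ((continuous_const.mul continuous_id').intervalIntegrable u v)
  rw [this, intervalIntegral.integral_const_mul, integral_id,
    intervalIntegral.integral_const, smul_eq_mul]
  ring


lemma restrict_Ioc_eq_Ioo (u v : ℝ) :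
    volume.restrict (Set.Ioc u v) = volume.restrict (Set.Ioo u v) :=
  (Measure.restrict_congr_set Ioo_ae_eq_Ioc).symm

variable {f : ℝ → ℝ} {l : ℝ}

/-- the energy integrand of a pair -/
noncomputable def eInt (f : ℝ → ℝ) (l : ℝ) (P : H1Pair 1) (t : ℝ) : ENNReal :=
  ENNReal.ofReal (Real.sqrt ((damageExt f l (P.b t))^2 * (P.da t)^2
      + (1 - P.b t)^2 * (P.db t)^2))

lemma surfEnergy_eq (P : H1Pair 1) :
    surfEnergy f l P = ∫⁻ t in Set.Ioo (0:ℝ) 1, eInt f l P t := rfl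

lemma da_int (P : H1Pair 1) : Integrable P.da (volume.restrict (Set.Ioo (0:ℝ) 1)) :=
  P.da_mem.integrable one_le_two

lemma db_int (P : H1Pair 1) : Integrable P.db (volume.restrict (Set.Ioo (0:ℝ) 1)) :=
  P.db_mem.integrable one_le_two

lemma b_cont (P : H1Pair 1) : ContinuousOn P.b (Set.Icc 0 1) := by
  have hint : IntegrableOn P.db (Set.Icc (0:ℝ) 1) volume := by
    rw [IntegrableOn,
      show volume.restrict (Set.Icc (0:ℝ) 1) = volume.restrict (Set.Ioo 0 1) from
        (Measure.restrict_congr_set Ioo_ae_eq_Icc).symm]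
    exact db_int P
  have h := (intervalIntegral.continuousOn_primitive (a := (0:ℝ)) (b := 1) hint)
  exact ((continuousOn_const.add h).congr (fun x hx => P.b_ftc x hx))

lemma damage_cont (hf : AdmissibleDamage f l) :
    ContinuousOn (damageExt f l) (Set.Icc 0 1) := by
  intro x hx
  rcases lt_or_eq_of_le hx.2 with hx1 | hx1
  · have hIco : x ∈ Set.Ico (0:ℝ) 1 := ⟨hx.1, hx1⟩
    have hset : Set.Icc (0:ℝ) 1 ∩ Set.Iio 1 = Set.Ico 0 1 := by
      ext y
      constructor
      · rintro ⟨⟨h1, _⟩, h3⟩; exact ⟨h1, h3⟩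
      · rintro ⟨h1, h2⟩; exact ⟨⟨h1, le_of_lt h2⟩, h2⟩
    have hnhds : 𝓝[Set.Icc (0:ℝ) 1] x = 𝓝[Set.Ico (0:ℝ) 1] x := by
      rw [nhdsWithin_restrict' _ (Iio_mem_nhds hx1), hset]
    unfold ContinuousWithinAt
    rw [hnhds]
    have hg : Filter.Tendsto (fun y => (1 - y) * f y) (𝓝[Set.Ico (0:ℝ) 1] x)
        (𝓝 ((1 - x) * f x)) := by
      exact ((continuous_const.sub continuous_id').continuousWithinAt).mul (hf.1 x hIco)
    have : damageExt f l x = (1 - x) * f x := if_neg (ne_of_lt hx1)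
    rw [this]
    refine hg.congr' ?_
    filter_upwards [self_mem_nhdsWithin] with y hy
    exact (if_neg (ne_of_lt hy.2)).symm
  · subst hx1
    unfold ContinuousWithinAt
    have : damageExt f l 1 = l := if_pos rfl
    rw [this]
    have hsplit : Set.Icc (0:ℝ) 1 ⊆ Set.Ico (0:ℝ) 1 ∪ {1} := by
      intro y hy; rcases lt_or_eq_of_le hy.2 with h | h
      · exact Or.inl ⟨hy.1, h⟩
      · exact Or.inr (by simp [h])
    refine Filter.Tendsto.mono_left ?_ (nhdsWithin_mono _ hsplit)
    rw [nhdsWithin_union]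
    refine Filter.Tendsto.sup ?_ ?_
    · have h1 : Filter.Tendsto (fun y => (1 - y) * f y) (𝓝[Set.Ico (0:ℝ) 1] 1) (𝓝 l) :=
        hf.2.2.2.2.2.mono_left (nhdsWithin_mono _ Set.Ico_subset_Iio_self)
      refine h1.congr' ?_
      filter_upwards [self_mem_nhdsWithin] with y hy
      exact (if_neg (ne_of_lt hy.2)).symm
    · rw [nhdsWithin_singleton]
      simpa [damageExt] using tendsto_pure_nhds (damageExt f l) 1

lemma eInt_aemeas (hf : AdmissibleDamage f l) (P : H1Pair 1)
    (hrange : ∀ t ∈ Set.Icc (0:ℝ) 1, P.b t ∈ Set.Icc (0:ℝ) 1) :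
    AEMeasurable (eInt f l P) (volume.restrict (Set.Ioo (0:ℝ) 1)) := by
  have hb : AEMeasurable P.b (volume.restrict (Set.Ioo (0:ℝ) 1)) :=
    ((b_cont P).mono Set.Ioo_subset_Icc_self).aemeasurable measurableSet_Ioo
  have hE : AEMeasurable (fun t => damageExt f l (P.b t)) (volume.restrict (Set.Ioo (0:ℝ) 1)) := by
    have : ContinuousOn (fun t => damageExt f l (P.b t)) (Set.Icc 0 1) :=
      (damage_cont hf).comp (b_cont P) (fun t ht => hrange t ht)
    exact (this.mono Set.Ioo_subset_Icc_self).aemeasurable measurableSet_Ioo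
  have hda : AEMeasurable P.da (volume.restrict (Set.Ioo (0:ℝ) 1)) :=
    P.da_mem.aestronglyMeasurable.aemeasurable
  have hdb : AEMeasurable P.db (volume.restrict (Set.Ioo (0:ℝ) 1)) :=
    P.db_mem.aestronglyMeasurable.aemeasurable
  have hsum : AEMeasurable (fun t => (damageExt f l (P.b t))^2 * (P.da t)^2
      + (1 - P.b t)^2 * (P.db t)^2) (volume.restrict (Set.Ioo (0:ℝ) 1)) :=
    ((hE.pow_const 2).mul (hda.pow_const 2)).add
      (((aemeasurable_const.sub hb).pow_const 2).mul (hdb.pow_const 2))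
  exact ENNReal.measurable_ofReal.comp_aemeasurable
    (Real.continuous_sqrt.measurable.comp_aemeasurable hsum)


lemma preimage_Ioo_mid : φ ⁻¹' (Set.Ioo 0 1) = Set.Ioo (4⁻¹:ℝ) (3/4) := by
  ext t
  simp only [Set.mem_preimage, Set.mem_Ioo, φ]
  constructor
  · rintro ⟨h1, h2⟩; constructor <;> linarith
  · rintro ⟨h1, h2⟩; constructor <;> linarith

lemma preimage_Ioc (x : ℝ) : φ ⁻¹' (Set.Ioc 0 (φ x)) = Set.Ioc (4⁻¹:ℝ) x := by
  ext t
  simp only [Set.mem_preimage, Set.mem_Ioc, φ]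
  constructor
  · rintro ⟨h1, h2⟩; constructor <;> linarith
  · rintro ⟨h1, h2⟩; constructor <;> linarith

lemma comp_lintegral (h : ℝ → ENNReal) (hm : AEMeasurable h (volume.restrict (Set.Ioo (0:ℝ) 1))) :
    ∫⁻ t in Set.Ioo (4⁻¹:ℝ) (3/4), h (φ t)
      = ENNReal.ofReal 2⁻¹ * ∫⁻ t in Set.Ioo (0:ℝ) 1, h t := by
  have hmap : Measure.map φ (volume.restrict (Set.Ioo (4⁻¹:ℝ) (3/4)))
      = ENNReal.ofReal 2⁻¹ • volume.restrict (Set.Ioo (0:ℝ) 1) := by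
    rw [← preimage_Ioo_mid, map_φ_restrict measurableSet_Ioo]
  have hm' : AEMeasurable h (Measure.map φ (volume.restrict (Set.Ioo (4⁻¹:ℝ) (3/4)))) := by
    rw [hmap]; exact hm.mono_measure (half_le _)
  rw [← lintegral_map' hm' φ_meas.aemeasurable, hmap, lintegral_smul_measure, smul_eq_mul]

lemma comp_setIntegral (h : ℝ → ℝ) (hm : Integrable h (volume.restrict (Set.Ioo (0:ℝ) 1)))
    {x : ℝ} (hx2 : x ≤ 3/4) :
    IntegrableOn (fun t => h (φ t)) (Set.Ioc (4⁻¹:ℝ) x) volume ∧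
    ∫ t in Set.Ioc (4⁻¹:ℝ) x, h (φ t) = 2⁻¹ * ∫ t in Set.Ioc (0:ℝ) (φ x), h t := by
  have hmap : Measure.map φ (volume.restrict (Set.Ioc (4⁻¹:ℝ) x))
      = ENNReal.ofReal 2⁻¹ • volume.restrict (Set.Ioc (0:ℝ) (φ x)) := by
    rw [← preimage_Ioc, map_φ_restrict measurableSet_Ioc]
  have hφx : φ x ≤ 1 := by simp only [φ]; linarith
  have hres : volume.restrict (Set.Ioc (0:ℝ) (φ x)) ≤ volume.restrict (Set.Ioo (0:ℝ) 1) := by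
    rw [restrict_Ioc_eq_Ioo]
    exact Measure.restrict_mono (Set.Ioo_subset_Ioo le_rfl hφx) le_rfl
  have hm1 : Integrable h (volume.restrict (Set.Ioc (0:ℝ) (φ x))) := hm.mono_measure hres
  have hm2 : Integrable h (Measure.map φ (volume.restrict (Set.Ioc (4⁻¹:ℝ) x))) := by
    rw [hmap]; exact hm1.smul_measure ENNReal.ofReal_ne_top
  constructor
  · exact
      (integrable_map_measure hm2.aestronglyMeasurable φ_meas.aemeasurable).1 hm2
  · rw [show ∫ t in Set.Ioc (4⁻¹:ℝ) x, h (φ t)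
        = ∫ y, h y ∂(Measure.map φ (volume.restrict (Set.Ioc (4⁻¹:ℝ) x))) from
      (integral_map φ_meas.aemeasurable hm2.aestronglyMeasurable).symm, hmap,
      integral_smul_measure]
    rw [ENNReal.toReal_ofReal (by norm_num)]
    simp [smul_eq_mul]


section Extend

variable (P : H1Pair 1) (c e : ℝ)

noncomputable def extA : ℝ → ℝ :=
  fun t => if t ≤ 4⁻¹ then P.a 0 else if t ≤ 3/4 then P.a (φ t) else P.a 1

noncomputable def extB : ℝ → ℝ :=
  fun t => if t ≤ 4⁻¹ then e + 4*(c-e)*t else if t ≤ 3/4 then P.b (φ t)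
    else c + 4*(e-c)*(t-3/4)

noncomputable def extDa : ℝ → ℝ :=
  (Set.Ioc (4⁻¹:ℝ) (3/4)).indicator (fun t => 2 * P.da (φ t))

noncomputable def extDb : ℝ → ℝ :=
  fun t => if t ≤ 4⁻¹ then 4*(c-e) else if t ≤ 3/4 then 2 * P.db (φ t) else 4*(e-c)

lemma memLp_comp (h : ℝ → ℝ) (hm : MemLp h 2 (volume.restrict (Set.Ioo (0:ℝ) 1))) :
    MemLp (fun t => h (φ t)) 2 (volume.restrict (Set.Ioo (4⁻¹:ℝ) (3/4))) := by
  have hmap : Measure.map φ (volume.restrict (Set.Ioo (4⁻¹:ℝ) (3/4)))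
      = ENNReal.ofReal 2⁻¹ • volume.restrict (Set.Ioo (0:ℝ) 1) := by
    rw [← preimage_Ioo_mid, map_φ_restrict measurableSet_Ioo]
  have hm' : MemLp h 2 (Measure.map φ (volume.restrict (Set.Ioo (4⁻¹:ℝ) (3/4)))) := by
    rw [hmap]; exact hm.mono_measure (half_le _)
  exact hm'.comp_of_map φ_meas.aemeasurable

lemma restrict_mid :
    (volume.restrict (Set.Ioo (0:ℝ) 1)).restrict (Set.Ioc (4⁻¹:ℝ) (3/4))
      = volume.restrict (Set.Ioo (4⁻¹:ℝ) (3/4)) := by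
  rw [Measure.restrict_restrict measurableSet_Ioc,
    Set.inter_eq_self_of_subset_left (by
      intro t ht
      exact ⟨by simp at ht ⊢; linarith [ht.1], by simp at ht ⊢; linarith [ht.2]⟩),
    restrict_Ioc_eq_Ioo]

lemma extDa_mem : MemLp (extDa P) 2 (volume.restrict (Set.Ioo (0:ℝ) 1)) := by
  rw [extDa, memLp_indicator_iff_restrict measurableSet_Ioc, restrict_mid]
  exact (memLp_comp P.da P.da_mem).const_mul 2

lemma extDb_mem : MemLp (extDb P c e) 2 (volume.restrict (Set.Ioo (0:ℝ) 1)) := by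
  have hdecomp : extDb P c e =
      (fun t => if t ≤ 4⁻¹ then 4*(c-e) else if t ≤ 3/4 then 0 else 4*(e-c))
        + (Set.Ioc (4⁻¹:ℝ) (3/4)).indicator (fun t => 2 * P.db (φ t)) := by
    funext t
    simp only [Pi.add_apply, Set.indicator, Set.mem_Ioc, extDb]
    by_cases h1 : t ≤ 4⁻¹
    · simp [h1, not_lt.2 h1]
    · by_cases h2 : t ≤ 3/4
      · simp [h1, h2, not_le.1 h1]
      · simp [h1, h2]
  rw [hdecomp]
  refine MemLp.add ?_ ?_
  · refine MemLp.of_bound ?_ (|4*(c-e)| + |4*(e-c)|) ?_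
    · refine Measurable.aestronglyMeasurable ?_
      refine Measurable.ite measurableSet_Iic measurable_const ?_
      exact Measurable.ite measurableSet_Iic measurable_const measurable_const
    · refine ae_of_all _ fun t => ?_
      by_cases h1 : t ≤ 4⁻¹
      · simp only [h1, if_true, Real.norm_eq_abs]
        exact le_add_of_nonneg_right (abs_nonneg _)
      · by_cases h2 : t ≤ 3/4
        · simp only [h1, h2, if_false, if_true, Real.norm_eq_abs, abs_zero]
          positivity
        · simp only [h1, h2, if_false, Real.norm_eq_abs]
          exact le_add_of_nonneg_left (abs_nonneg _)
  · rw [memLp_indicator_iff_restrict measurableSet_Ioc, restrict_mid]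
    exact (memLp_comp P.db P.db_mem).const_mul 2


lemma φ_mem_Icc {t : ℝ} (h1 : 4⁻¹ < t) (h2 : t ≤ 3/4) : φ t ∈ Set.Icc (0:ℝ) 1 := by
  simp only [φ, Set.mem_Icc]; constructor <;> linarith

lemma int_extDb_left {x : ℝ} (hx0 : 0 ≤ x) (hx : x ≤ 4⁻¹) :
    ∫ t in Set.Ioc (0:ℝ) x, extDb P c e t = 4*(c-e)*x := by
  have h1 : ∫ t in Set.Ioc (0:ℝ) x, extDb P c e t = ∫ _t in Set.Ioc (0:ℝ) x, (4*(c-e)) :=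
    setIntegral_congr_fun measurableSet_Ioc (fun t ht => if_pos (le_trans ht.2 hx))
  rw [h1, setIntegral_const, Real.volume_real_Ioc_of_le (by linarith), smul_eq_mul]
  ring

lemma intOn_extDb_left {x : ℝ} (hx : x ≤ 4⁻¹) :
    IntegrableOn (extDb P c e) (Set.Ioc (0:ℝ) x) volume := by
  refine ((integrableOn_const_iff (C := 4*(c-e))).2 (Or.inr measure_Ioc_lt_top)).congr_fun
    ?_ measurableSet_Ioc
  exact fun t ht => (if_pos (le_trans ht.2 hx)).symm

lemma extDb_eq_mid {x : ℝ} (h2 : x ≤ 3/4) :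
    Set.EqOn (fun t => 2 * P.db (φ t)) (extDb P c e) (Set.Ioc (4⁻¹:ℝ) x) := by
  intro t ht
  have h1 : ¬ t ≤ 4⁻¹ := not_le.2 ht.1
  have h3 : t ≤ 3/4 := le_trans ht.2 h2
  simp [extDb, h1, h3]

lemma int_extDb_mid {x : ℝ} (h1 : 4⁻¹ < x) (h2 : x ≤ 3/4) :
    ∫ t in Set.Ioc (4⁻¹:ℝ) x, extDb P c e t = P.b (φ x) - P.b 0 := by
  obtain ⟨_, hval⟩ := comp_setIntegral (fun y => 2 * P.db y) ((db_int P).const_mul 2) h2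
  rw [← setIntegral_congr_fun measurableSet_Ioc (extDb_eq_mid P c e h2), hval,
    MeasureTheory.integral_const_mul]
  have hb := P.b_ftc (φ x) (φ_mem_Icc h1 h2)
  rw [hb]; ring

lemma intOn_extDb_mid {x : ℝ} (h2 : x ≤ 3/4) :
    IntegrableOn (extDb P c e) (Set.Ioc (4⁻¹:ℝ) x) volume := by
  obtain ⟨hint, _⟩ := comp_setIntegral (fun y => 2 * P.db y) ((db_int P).const_mul 2) h2
  exact hint.congr_fun (extDb_eq_mid P c e h2) measurableSet_Ioc

lemma int_extDb_right {x : ℝ} (h1 : 3/4 < x) :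
    ∫ t in Set.Ioc (3/4:ℝ) x, extDb P c e t = 4*(e-c)*(x - 3/4) := by
  have heq : ∫ t in Set.Ioc (3/4:ℝ) x, extDb P c e t = ∫ _t in Set.Ioc (3/4:ℝ) x, (4*(e-c)) :=
    setIntegral_congr_fun measurableSet_Ioc (fun t ht => by
      have h2 : ¬ t ≤ 4⁻¹ := by push_neg; linarith [ht.1]
      have h3 : ¬ t ≤ 3/4 := not_le.2 ht.1
      simp [extDb, h2, h3])
  rw [heq, setIntegral_const, Real.volume_real_Ioc_of_le (by linarith), smul_eq_mul]
  ring

lemma intOn_extDb_right {x : ℝ} :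
    IntegrableOn (extDb P c e) (Set.Ioc (3/4:ℝ) x) volume := by
  refine ((integrableOn_const_iff (C := 4*(e-c))).2 (Or.inr measure_Ioc_lt_top)).congr_fun
    ?_ measurableSet_Ioc
  intro t ht
  have h2 : ¬ t ≤ 4⁻¹ := by push_neg; linarith [ht.1]
  have h3 : ¬ t ≤ 3/4 := not_le.2 ht.1
  simp [extDb, h2, h3]

lemma extB_ftc (hb0 : P.b 0 = c) (hb1 : P.b 1 = c) :
    ∀ x ∈ Set.Icc (0:ℝ) 1, extB P c e x = extB P c e 0 + ∫ t in Set.Ioc (0:ℝ) x, extDb P c e t := by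
  have h0 : extB P c e 0 = e := by simp [extB]
  have hmid : ∀ x, 4⁻¹ < x → x ≤ 3/4 →
      ∫ t in Set.Ioc (0:ℝ) x, extDb P c e t = (c - e) + (P.b (φ x) - c) := by
    intro x h1 h2
    rw [show Set.Ioc (0:ℝ) x = Set.Ioc (0:ℝ) 4⁻¹ ∪ Set.Ioc (4⁻¹:ℝ) x from
        (Set.Ioc_union_Ioc_eq_Ioc (by norm_num) h1.le).symm,
      MeasureTheory.setIntegral_union (Set.Ioc_disjoint_Ioc_of_le le_rfl) measurableSet_Ioc
        (intOn_extDb_left P c e le_rfl) (intOn_extDb_mid P c e h2),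
      int_extDb_left P c e (by norm_num) le_rfl, int_extDb_mid P c e h1 h2, hb0]
    ring
  intro x hx
  rcases le_or_gt x 4⁻¹ with h1 | h1
  · rw [h0, int_extDb_left P c e hx.1 h1]
    simp only [extB, if_pos h1]
    try ring
  · rcases le_or_gt x (3/4) with h2 | h2
    · rw [h0, hmid x h1 h2]
      simp only [extB, if_neg (not_le.2 h1), if_pos h2]
      ring
    · have hI34 : ∫ t in Set.Ioc (0:ℝ) (3/4), extDb P c e t = c - e := by
        rw [hmid (3/4) (by norm_num) le_rfl, show φ (3/4) = 1 by norm_num [φ], hb1]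
        ring
      have hIOn34 : IntegrableOn (extDb P c e) (Set.Ioc (0:ℝ) (3/4)) volume := by
        rw [show Set.Ioc (0:ℝ) (3/4) = Set.Ioc (0:ℝ) 4⁻¹ ∪ Set.Ioc (4⁻¹:ℝ) (3/4) from
          (Set.Ioc_union_Ioc_eq_Ioc (by norm_num) (by norm_num)).symm]
        exact (intOn_extDb_left P c e le_rfl).union (intOn_extDb_mid P c e le_rfl)
      rw [h0, show Set.Ioc (0:ℝ) x = Set.Ioc (0:ℝ) (3/4) ∪ Set.Ioc (3/4:ℝ) x from
          (Set.Ioc_union_Ioc_eq_Ioc (by norm_num) h2.le).symm,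
        MeasureTheory.setIntegral_union (Set.Ioc_disjoint_Ioc_of_le le_rfl) measurableSet_Ioc
          hIOn34 (intOn_extDb_right P c e), hI34, int_extDb_right P c e h2]
      simp only [extB, if_neg (not_le.2 h1), if_neg (not_le.2 h2)]
      have hq : ¬ x ≤ 4⁻¹ := not_le.2 h1
      ring


lemma extDa_eq_zero_left {x : ℝ} (hx : x ≤ 4⁻¹) :
    Set.EqOn (extDa P) 0 (Set.Ioc (0:ℝ) x) := by
  intro t ht
  exact Set.indicator_of_notMem (fun hm => absurd (le_trans ht.2 hx) (not_le.2 hm.1)) _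

lemma extDa_eq_zero_right {x : ℝ} :
    Set.EqOn (extDa P) 0 (Set.Ioc (3/4:ℝ) x) := by
  intro t ht
  exact Set.indicator_of_notMem (fun hm => absurd ht.1 (not_lt.2 hm.2)) _

lemma int_extDa_mid {x : ℝ} (h1 : 4⁻¹ < x) (h2 : x ≤ 3/4) :
    ∫ t in Set.Ioc (4⁻¹:ℝ) x, extDa P t = P.a (φ x) - P.a 0 := by
  obtain ⟨_, hval⟩ := comp_setIntegral (fun y => 2 * P.da y) ((da_int P).const_mul 2) h2
  have heq : Set.EqOn (extDa P) (fun t => 2 * P.da (φ t)) (Set.Ioc (4⁻¹:ℝ) x) := by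
    intro t ht
    have hmem : t ∈ Set.Ioc (4⁻¹:ℝ) (3/4) := ⟨ht.1, le_trans ht.2 h2⟩
    simp [extDa, Set.indicator_of_mem hmem]
  rw [setIntegral_congr_fun measurableSet_Ioc heq, hval, MeasureTheory.integral_const_mul]
  have ha := P.a_ftc (φ x) (φ_mem_Icc h1 h2)
  rw [ha]; ring

lemma intOn_extDa_mid {x : ℝ} (h2 : x ≤ 3/4) :
    IntegrableOn (extDa P) (Set.Ioc (4⁻¹:ℝ) x) volume := by
  obtain ⟨hint, _⟩ := comp_setIntegral (fun y => 2 * P.da y) ((da_int P).const_mul 2) h2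
  refine hint.congr_fun ?_ measurableSet_Ioc
  intro t ht
  have hmem : t ∈ Set.Ioc (4⁻¹:ℝ) (3/4) := ⟨ht.1, le_trans ht.2 h2⟩
  simp [extDa, Set.indicator_of_mem hmem]

lemma intOn_extDa_zero {u v : ℝ} (h : Set.EqOn (extDa P) 0 (Set.Ioc u v)) :
    IntegrableOn (extDa P) (Set.Ioc u v) volume := by
  have h0 : IntegrableOn (fun _ : ℝ => (0:ℝ)) (Set.Ioc u v) volume := integrableOn_zero
  refine h0.congr_fun (fun t ht => ?_) measurableSet_Ioc
  simpa using (h ht).symm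

lemma extA_ftc :
    ∀ x ∈ Set.Icc (0:ℝ) 1, extA P x = extA P 0 + ∫ t in Set.Ioc (0:ℝ) x, extDa P t := by
  have h0 : extA P 0 = P.a 0 := if_pos (by norm_num)
  have hmid : ∀ x, 4⁻¹ < x → x ≤ 3/4 →
      ∫ t in Set.Ioc (0:ℝ) x, extDa P t = P.a (φ x) - P.a 0 := by
    intro x h1 h2
    rw [show Set.Ioc (0:ℝ) x = Set.Ioc (0:ℝ) 4⁻¹ ∪ Set.Ioc (4⁻¹:ℝ) x from
        (Set.Ioc_union_Ioc_eq_Ioc (by norm_num) h1.le).symm,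
      MeasureTheory.setIntegral_union (Set.Ioc_disjoint_Ioc_of_le le_rfl) measurableSet_Ioc
        (intOn_extDa_zero P (extDa_eq_zero_left P le_rfl)) (intOn_extDa_mid P h2),
      setIntegral_congr_fun measurableSet_Ioc (extDa_eq_zero_left P le_rfl),
      int_extDa_mid P h1 h2]
    simp
  intro x hx
  rcases le_or_gt x 4⁻¹ with h1 | h1
  · rw [h0, setIntegral_congr_fun measurableSet_Ioc (extDa_eq_zero_left P h1)]
    simp only [extA, if_pos h1]
    simp
  · rcases le_or_gt x (3/4) with h2 | h2
    · rw [h0, hmid x h1 h2]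
      simp only [extA, if_neg (not_le.2 h1), if_pos h2]
      ring
    · have hI34 : ∫ t in Set.Ioc (0:ℝ) (3/4), extDa P t = P.a 1 - P.a 0 := by
        rw [hmid (3/4) (by norm_num) le_rfl, show φ (3/4) = 1 by norm_num [φ]]
      have hIOn34 : IntegrableOn (extDa P) (Set.Ioc (0:ℝ) (3/4)) volume := by
        rw [show Set.Ioc (0:ℝ) (3/4) = Set.Ioc (0:ℝ) 4⁻¹ ∪ Set.Ioc (4⁻¹:ℝ) (3/4) from
          (Set.Ioc_union_Ioc_eq_Ioc (by norm_num) (by norm_num)).symm]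
        exact (intOn_extDa_zero P (extDa_eq_zero_left P le_rfl)).union (intOn_extDa_mid P le_rfl)
      rw [h0, show Set.Ioc (0:ℝ) x = Set.Ioc (0:ℝ) (3/4) ∪ Set.Ioc (3/4:ℝ) x from
          (Set.Ioc_union_Ioc_eq_Ioc (by norm_num) h2.le).symm,
        MeasureTheory.setIntegral_union (Set.Ioc_disjoint_Ioc_of_le le_rfl) measurableSet_Ioc
          hIOn34 (intOn_extDa_zero P (extDa_eq_zero_right P)), hI34,
        setIntegral_congr_fun measurableSet_Ioc (extDa_eq_zero_right P)]
      simp only [extA, if_neg (not_le.2 h1), if_neg (not_le.2 h2)]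
      simp

noncomputable def extPair (hb0 : P.b 0 = c) (hb1 : P.b 1 = c) : H1Pair 1 :=
  ⟨extA P, extB P c e, extDa P, extDb P c e, extDa_mem P, extDb_mem P c e,
    extA_ftc P, extB_ftc P c e hb0 hb1⟩


lemma extB_range (hrange : ∀ t ∈ Set.Icc (0:ℝ) 1, P.b t ∈ Set.Icc (0:ℝ) 1)
    (hc : c ∈ Set.Icc (0:ℝ) 1) (he : e ∈ Set.Icc (0:ℝ) 1) :
    ∀ t ∈ Set.Icc (0:ℝ) 1, extB P c e t ∈ Set.Icc (0:ℝ) 1 := by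
  intro t ht
  simp only [extB]
  split_ifs with h1 h2
  · constructor
    · nlinarith [mul_nonneg (by linarith : (0:ℝ) ≤ 1-4*t) he.1,
        mul_nonneg (by linarith [ht.1] : (0:ℝ) ≤ 4*t) hc.1]
    · nlinarith [mul_nonneg (by linarith : (0:ℝ) ≤ 1-4*t) (by linarith [he.2] : (0:ℝ) ≤ 1-e),
        mul_nonneg (by linarith [ht.1] : (0:ℝ) ≤ 4*t) (by linarith [hc.2] : (0:ℝ) ≤ 1-c)]
  · exact hrange (φ t) (φ_mem_Icc (not_le.1 h1) h2)
  · have h3 : 3/4 < t := not_le.1 h2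
    constructor
    · nlinarith [mul_nonneg (by linarith [ht.2] : (0:ℝ) ≤ 4-4*t) hc.1,
        mul_nonneg (by linarith : (0:ℝ) ≤ 4*t-3) he.1]
    · nlinarith [mul_nonneg (by linarith [ht.2] : (0:ℝ) ≤ 4-4*t) (by linarith [hc.2] : (0:ℝ) ≤ 1-c),
        mul_nonneg (by linarith : (0:ℝ) ≤ 4*t-3) (by linarith [he.2] : (0:ℝ) ≤ 1-e)]

variable {f : ℝ → ℝ} {l : ℝ}

lemma ext_energy (hf : AdmissibleDamage f l)
    (hrange : ∀ t ∈ Set.Icc (0:ℝ) 1, P.b t ∈ Set.Icc (0:ℝ) 1)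
    (hc : c ∈ Set.Icc (0:ℝ) 1) (he : e ∈ Set.Icc (0:ℝ) 1)
    (hb0 : P.b 0 = c) (hb1 : P.b 1 = c) :
    surfEnergy f l (extPair P c e hb0 hb1)
      = surfEnergy f l P + ENNReal.ofReal (|c - e| * (2 - c - e)) := by
  set Q := extPair P c e hb0 hb1 with hQdef
  have hQb : Q.b = extB P c e := rfl
  have hQda : Q.da = extDa P := rfl
  have hQdb : Q.db = extDb P c e := rfl
  have hdisj1 : Disjoint (Set.Ioc (0:ℝ) (3/4)) (Set.Ioo (3/4:ℝ) 1) := by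
    rw [Set.disjoint_left]
    rintro t ⟨_, h⟩ ⟨h', _⟩
    linarith
  have hK2 : 0 ≤ |c - e| * (2 - c - e) / 2 := by
    have : (0:ℝ) ≤ 2 - c - e := by linarith [hc.2, he.2]
    positivity
  -- left transition
  have hleft : ∫⁻ t in Set.Ioc (0:ℝ) 4⁻¹, eInt f l Q t
      = ENNReal.ofReal (|c - e| * (2 - c - e) / 2) := by
    rw [restrict_Ioc_eq_Ioo]
    have hpt : ∀ t ∈ Set.Ioo (0:ℝ) 4⁻¹, eInt f l Q t
        = ENNReal.ofReal ((1-e)*(4*|c-e|) + (-(4*(c-e))*(4*|c-e|))*t) := by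
      intro t ht
      have h1 : t ≤ 4⁻¹ := ht.2.le
      have hnm : t ∉ Set.Ioc (4⁻¹:ℝ) (3/4) := fun hm => absurd hm.1 (not_lt.2 h1)
      simp only [eInt, hQb, hQda, hQdb, extB, extDa, extDb, if_pos h1,
        Set.indicator_of_notMem hnm]
      congr 1
      have harg : (damageExt f l (e + 4*(c-e)*t))^2 * (0:ℝ)^2
          + (1 - (e + 4*(c-e)*t))^2 * (4*(c-e))^2
          = ((1 - (e + 4*(c-e)*t)) * (4*(c-e)))^2 := by ring
      rw [harg, Real.sqrt_sq_eq_abs, abs_mul]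
      have hX : 0 ≤ 1 - (e + 4*(c-e)*t) := by
        nlinarith [mul_nonneg (by linarith : (0:ℝ) ≤ 1-4*t) (by linarith [he.2] : (0:ℝ) ≤ 1-e),
          mul_nonneg (by linarith [ht.1] : (0:ℝ) ≤ 4*t) (by linarith [hc.2] : (0:ℝ) ≤ 1-c)]
      rw [abs_of_nonneg hX, show |4*(c-e)| = 4*|c-e| by rw [abs_mul]; norm_num]
      ring
    rw [setLIntegral_congr_fun measurableSet_Ioo hpt]
    have hcont : Continuous (fun t : ℝ => (1-e)*(4*|c-e|) + (-(4*(c-e))*(4*|c-e|))*t) :=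
      continuous_const.add (continuous_const.mul continuous_id')
    have hint : Integrable (fun t : ℝ => (1-e)*(4*|c-e|) + (-(4*(c-e))*(4*|c-e|))*t)
        (volume.restrict (Set.Ioo (0:ℝ) 4⁻¹)) :=
      (hcont.integrableOn_Icc (a := 0) (b := 4⁻¹)).mono_set Set.Ioo_subset_Icc_self
    have hnn : 0 ≤ᵐ[volume.restrict (Set.Ioo (0:ℝ) 4⁻¹)]
        (fun t : ℝ => (1-e)*(4*|c-e|) + (-(4*(c-e))*(4*|c-e|))*t) := by
      refine (ae_restrict_iff' measurableSet_Ioo).2 (ae_of_all _ fun t ht => ?_)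
      have hX : 0 ≤ 1 - (e + 4*(c-e)*t) := by
        nlinarith [mul_nonneg (by linarith [ht.2] : (0:ℝ) ≤ 1-4*t)
            (by linarith [he.2] : (0:ℝ) ≤ 1-e),
          mul_nonneg (by linarith [ht.1] : (0:ℝ) ≤ 4*t) (by linarith [hc.2] : (0:ℝ) ≤ 1-c)]
      have hid : (1-e)*(4*|c-e|) + (-(4*(c-e))*(4*|c-e|))*t
          = (1 - (e + 4*(c-e)*t)) * (4*|c-e|) := by ring
      show (0:ℝ) ≤ (1-e)*(4*|c-e|) + (-(4*(c-e))*(4*|c-e|))*t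
      rw [hid]
      exact mul_nonneg hX (by positivity)
    rw [← ofReal_integral_eq_lintegral_ofReal hint hnn,
      ← integral_Ioc_eq_integral_Ioo, ← intervalIntegral.integral_of_le (by norm_num),
      integral_affine]
    congr 1
    ring
  -- right transition
  have hright : ∫⁻ t in Set.Ioo (3/4:ℝ) 1, eInt f l Q t
      = ENNReal.ofReal (|c - e| * (2 - c - e) / 2) := by
    have hpt : ∀ t ∈ Set.Ioo (3/4:ℝ) 1, eInt f l Q t
        = ENNReal.ofReal (((1-c)+3*(e-c))*(4*|e-c|) + (-(4*(e-c))*(4*|e-c|))*t) := by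
      intro t ht
      have h2 : ¬ t ≤ 3/4 := not_le.2 ht.1
      have h1 : ¬ t ≤ 4⁻¹ := by push_neg; linarith [ht.1]
      have hnm : t ∉ Set.Ioc (4⁻¹:ℝ) (3/4) := fun hm => absurd hm.2 h2
      simp only [eInt, hQb, hQda, hQdb, extB, extDa, extDb, if_neg h1, if_neg h2,
        Set.indicator_of_notMem hnm]
      congr 1
      have harg : (damageExt f l (c + 4*(e-c)*(t-3/4)))^2 * (0:ℝ)^2
          + (1 - (c + 4*(e-c)*(t-3/4)))^2 * (4*(e-c))^2
          = ((1 - (c + 4*(e-c)*(t-3/4))) * (4*(e-c)))^2 := by ring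
      rw [harg, Real.sqrt_sq_eq_abs, abs_mul]
      have hX : 0 ≤ 1 - (c + 4*(e-c)*(t-3/4)) := by
        nlinarith [mul_nonneg (by linarith [ht.2] : (0:ℝ) ≤ 4-4*t)
            (by linarith [hc.2] : (0:ℝ) ≤ 1-c),
          mul_nonneg (by linarith [ht.1] : (0:ℝ) ≤ 4*t-3) (by linarith [he.2] : (0:ℝ) ≤ 1-e)]
      rw [abs_of_nonneg hX, show |4*(e-c)| = 4*|e-c| by rw [abs_mul]; norm_num]
      ring
    rw [setLIntegral_congr_fun measurableSet_Ioo hpt]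
    have hcont : Continuous (fun t : ℝ => ((1-c)+3*(e-c))*(4*|e-c|) + (-(4*(e-c))*(4*|e-c|))*t) :=
      continuous_const.add (continuous_const.mul continuous_id')
    have hint : Integrable (fun t : ℝ => ((1-c)+3*(e-c))*(4*|e-c|) + (-(4*(e-c))*(4*|e-c|))*t)
        (volume.restrict (Set.Ioo (3/4:ℝ) 1)) :=
      (hcont.integrableOn_Icc (a := 3/4) (b := 1)).mono_set Set.Ioo_subset_Icc_self
    have hnn : 0 ≤ᵐ[volume.restrict (Set.Ioo (3/4:ℝ) 1)]
        (fun t : ℝ => ((1-c)+3*(e-c))*(4*|e-c|) + (-(4*(e-c))*(4*|e-c|))*t) := by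
      refine (ae_restrict_iff' measurableSet_Ioo).2 (ae_of_all _ fun t ht => ?_)
      have hX : 0 ≤ 1 - (c + 4*(e-c)*(t-3/4)) := by
        nlinarith [mul_nonneg (by linarith [ht.2] : (0:ℝ) ≤ 4-4*t)
            (by linarith [hc.2] : (0:ℝ) ≤ 1-c),
          mul_nonneg (by linarith [ht.1] : (0:ℝ) ≤ 4*t-3) (by linarith [he.2] : (0:ℝ) ≤ 1-e)]
      have hid : ((1-c)+3*(e-c))*(4*|e-c|) + (-(4*(e-c))*(4*|e-c|))*t
          = (1 - (c + 4*(e-c)*(t-3/4))) * (4*|e-c|) := by ring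
      show (0:ℝ) ≤ ((1-c)+3*(e-c))*(4*|e-c|) + (-(4*(e-c))*(4*|e-c|))*t
      rw [hid]
      exact mul_nonneg hX (by positivity)
    rw [← ofReal_integral_eq_lintegral_ofReal hint hnn,
      ← integral_Ioc_eq_integral_Ioo, ← intervalIntegral.integral_of_le (by norm_num),
      integral_affine]
    congr 1
    rw [abs_sub_comm e c]
    ring
  -- middle part
  have hmid : ∫⁻ t in Set.Ioc (4⁻¹:ℝ) (3/4), eInt f l Q t = surfEnergy f l P := by
    rw [restrict_Ioc_eq_Ioo]
    have hpt : ∀ t ∈ Set.Ioo (4⁻¹:ℝ) (3/4), eInt f l Q t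
        = ENNReal.ofReal 2 * eInt f l P (φ t) := by
      intro t ht
      have h1 : ¬ t ≤ 4⁻¹ := not_le.2 ht.1
      have h2 : t ≤ 3/4 := ht.2.le
      have hmem : t ∈ Set.Ioc (4⁻¹:ℝ) (3/4) := ⟨ht.1, h2⟩
      simp only [eInt, hQb, hQda, hQdb, extB, extDa, extDb, if_neg h1, if_pos h2,
        Set.indicator_of_mem hmem]
      rw [← ENNReal.ofReal_mul (by norm_num : (0:ℝ) ≤ 2)]
      congr 1
      have harg : (damageExt f l (P.b (φ t)))^2 * (2*P.da (φ t))^2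
          + (1 - P.b (φ t))^2 * (2*P.db (φ t))^2
          = 2^2 * ((damageExt f l (P.b (φ t)))^2 * (P.da (φ t))^2
            + (1 - P.b (φ t))^2 * (P.db (φ t))^2) := by ring
      rw [harg, Real.sqrt_mul (by norm_num : (0:ℝ) ≤ (2:ℝ)^2),
        Real.sqrt_sq (by norm_num : (0:ℝ) ≤ (2:ℝ))]
    rw [setLIntegral_congr_fun measurableSet_Ioo hpt,
      lintegral_const_mul' _ _ ENNReal.ofReal_ne_top,
      comp_lintegral (eInt f l P) (eInt_aemeas hf P hrange),
      ← mul_assoc, ← ENNReal.ofReal_mul (by norm_num : (0:ℝ) ≤ 2)]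
    norm_num [surfEnergy_eq]
  -- assemble
  rw [surfEnergy_eq,
    show Set.Ioo (0:ℝ) 1 = Set.Ioc (0:ℝ) (3/4) ∪ Set.Ioo (3/4:ℝ) 1 from
      (Set.Ioc_union_Ioo_eq_Ioo (by norm_num) (by norm_num)).symm,
    lintegral_union measurableSet_Ioo hdisj1,
    show Set.Ioc (0:ℝ) (3/4) = Set.Ioc (0:ℝ) 4⁻¹ ∪ Set.Ioc (4⁻¹:ℝ) (3/4) from
      (Set.Ioc_union_Ioc_eq_Ioc (by norm_num) (by norm_num)).symm,
    lintegral_union measurableSet_Ioc (Set.Ioc_disjoint_Ioc_of_le le_rfl),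
    hleft, hmid, hright]
  have hsum : ENNReal.ofReal (|c - e| * (2 - c - e) / 2)
      + ENNReal.ofReal (|c - e| * (2 - c - e) / 2)
      = ENNReal.ofReal (|c - e| * (2 - c - e)) := by
    rw [← ENNReal.ofReal_add hK2 hK2]
    congr 1
    ring
  calc ENNReal.ofReal (|c - e| * (2 - c - e) / 2) + surfEnergy f l P
        + ENNReal.ofReal (|c - e| * (2 - c - e) / 2)
      = surfEnergy f l P + (ENNReal.ofReal (|c - e| * (2 - c - e) / 2)
        + ENNReal.ofReal (|c - e| * (2 - c - e) / 2)) := by ring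
    _ = surfEnergy f l P + ENNReal.ofReal (|c - e| * (2 - c - e)) := by rw [hsum]


lemma extend_exists (hf : AdmissibleDamage f l)
    (hrange : ∀ t ∈ Set.Icc (0:ℝ) 1, P.b t ∈ Set.Icc (0:ℝ) 1)
    (hc : c ∈ Set.Icc (0:ℝ) 1) (he : e ∈ Set.Icc (0:ℝ) 1)
    (hb0 : P.b 0 = c) (hb1 : P.b 1 = c) :
    ∃ Q : H1Pair 1, Q.a 0 = P.a 0 ∧ Q.a 1 = P.a 1 ∧ Q.b 0 = e ∧ Q.b 1 = e ∧
      (∀ t ∈ Set.Icc (0:ℝ) 1, Q.b t ∈ Set.Icc (0:ℝ) 1) ∧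
      surfEnergy f l Q = surfEnergy f l P + ENNReal.ofReal (|c - e| * (2 - c - e)) := by
  refine ⟨extPair P c e hb0 hb1, ?_, ?_, ?_, ?_,
    extB_range P c e hrange hc he, ext_energy P c e hf hrange hc he hb0 hb1⟩
  · show extA P 0 = P.a 0
    simp [extA]
  · show extA P 1 = P.a 1
    have h1 : ¬ (1:ℝ) ≤ 4⁻¹ := by norm_num
    have h2 : ¬ (1:ℝ) ≤ 3/4 := by norm_num
    simp [extA, h1, h2]
  · show extB P c e 0 = e
    simp [extB]
  · show extB P c e 1 = e
    have h1 : ¬ (1:ℝ) ≤ 4⁻¹ := by norm_num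
    have h2 : ¬ (1:ℝ) ≤ 3/4 := by norm_num
    simp only [extB, if_neg h1, if_neg h2]
    ring

end Extend

/-- the trivial competitor with `β ≡ 0` and zero energy -/
noncomputable def triv (s : ℝ) : H1Pair 1 where
  a := fun t => s * t
  b := fun _ => 0
  da := fun _ => s
  db := fun _ => 0
  da_mem := memLp_const s
  db_mem := memLp_const 0
  a_ftc := by
    intro x hx
    rw [setIntegral_const, Real.volume_real_Ioc_of_le (by linarith [hx.1]), smul_eq_mul]
    ring
  b_ftc := by
    intro x hx
    simp

lemma triv_energy {f : ℝ → ℝ} {l : ℝ} (hf : AdmissibleDamage f l) (s : ℝ) :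
    surfEnergy f l (triv s) = 0 := by
  have hf0 : f 0 = 0 := (hf.2.2.2.1 0 ⟨le_rfl, one_pos⟩).2 rfl
  have hpt : ∀ t ∈ Set.Ioo (0:ℝ) 1, eInt f l (triv s) t = 0 := by
    intro t _
    show ENNReal.ofReal (Real.sqrt ((damageExt f l 0)^2 * s^2 + (1 - 0)^2 * 0^2)) = 0
    rw [damageExt, if_neg (by norm_num : (0:ℝ) ≠ 1)]
    simp [hf0]
  rw [surfEnergy_eq, setLIntegral_congr_fun measurableSet_Ioo hpt]
  simp

end SurfAux

/-- For every `η > 0` and every `s ≥ 0`, `|g(s) − g^{(η)}(s)| ≤ η²`. -/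
theorem surfDensity_eta_close (f : ℝ → ℝ) (l : ℝ) (hf : AdmissibleDamage f l) :
    ∀ η : ℝ, 0 < η → ∀ s : ℝ, 0 ≤ s →
      |surfDensity f l s - surfDensityBV f l η s| ≤ η^2 := by

  intro η hη s hs
  simp only [surfDensity, surfDensityBV]
  set A := ⨅ (P : H1Pair 1) (_ : P.Admissible s), surfEnergy f l P with hA
  set B := ⨅ (P : H1Pair 1) (_ : P.AdmissibleBV s (1 - η)), surfEnergy f l P with hB
  rcases le_or_gt η 1 with hη1 | hη1
  · have hc1 : (1:ℝ) ∈ Set.Icc (0:ℝ) 1 := ⟨zero_le_one, le_rfl⟩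
    have he : (1 - η) ∈ Set.Icc (0:ℝ) 1 := ⟨by linarith, by linarith⟩
    have h1 : A ≤ B + ENNReal.ofReal (η^2) := by
      rw [hB, ENNReal.iInf_add]
      refine le_iInf fun P => ?_
      rw [ENNReal.iInf_add]
      refine le_iInf fun hP => ?_
      obtain ⟨Q, ha0, ha1, hb0, hb1, hrange, hE⟩ :=
        SurfAux.extend_exists P (1-η) 1 hf hP.1 he hc1 hP.2.2.2.1 hP.2.2.2.2
      have hQadm : Q.Admissible s :=
        ⟨hrange, by rw [ha0]; exact hP.2.1, by rw [ha1]; exact hP.2.2.1, hb0, hb1⟩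
      refine le_trans (iInf₂_le Q hQadm) ?_
      rw [hE, show |1 - η - 1| * (2 - (1-η) - 1) = η^2 by
        rw [show (1 - η - 1 : ℝ) = -η by ring, abs_neg, abs_of_nonneg hη.le]; ring]
    have h2 : B ≤ A + ENNReal.ofReal (η^2) := by
      rw [hA, ENNReal.iInf_add]
      refine le_iInf fun P => ?_
      rw [ENNReal.iInf_add]
      refine le_iInf fun hP => ?_
      obtain ⟨Q, ha0, ha1, hb0, hb1, hrange, hE⟩ :=
        SurfAux.extend_exists P 1 (1-η) hf hP.1 hc1 he hP.2.2.2.1 hP.2.2.2.2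
      have hQadm : Q.AdmissibleBV s (1 - η) :=
        ⟨hrange, by rw [ha0]; exact hP.2.1, by rw [ha1]; exact hP.2.2.1, hb0, hb1⟩
      refine le_trans (iInf₂_le Q hQadm) ?_
      rw [hE, show |1 - (1-η)| * (2 - 1 - (1-η)) = η^2 by
        rw [show (1 - (1-η) : ℝ) = η by ring, abs_of_nonneg hη.le]; ring]
    by_cases hBtop : B = ⊤
    · have hAtop : A = ⊤ := by
        rw [hBtop] at h2
        rcases ENNReal.add_eq_top.1 (top_le_iff.1 h2) with h | h
        · exact h
        · exact absurd h ENNReal.ofReal_ne_top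
      rw [hAtop, hBtop]
      simp [sq_nonneg]
    · have hAne : A ≠ ⊤ := by
        intro hA'
        rw [hA'] at h1
        rcases ENNReal.add_eq_top.1 (top_le_iff.1 h1) with h | h
        · exact hBtop h
        · exact absurd h ENNReal.ofReal_ne_top
      have ht1 : A.toReal ≤ B.toReal + η^2 := by
        have := ENNReal.toReal_mono (ENNReal.add_ne_top.2 ⟨hBtop, ENNReal.ofReal_ne_top⟩) h1
        rwa [ENNReal.toReal_add hBtop ENNReal.ofReal_ne_top,
          ENNReal.toReal_ofReal (sq_nonneg η)] at this
      have ht2 : B.toReal ≤ A.toReal + η^2 := by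
        have := ENNReal.toReal_mono (ENNReal.add_ne_top.2 ⟨hAne, ENNReal.ofReal_ne_top⟩) h2
        rwa [ENNReal.toReal_add hAne ENNReal.ofReal_ne_top,
          ENNReal.toReal_ofReal (sq_nonneg η)] at this
      rw [abs_le]
      constructor <;> linarith
  · have hBtop : B = ⊤ := by
      have hempty : ∀ P : H1Pair 1, ¬ P.AdmissibleBV s (1-η) := by
        intro P hP
        have h01 : (0:ℝ) ∈ Set.Icc (0:ℝ) 1 := ⟨le_rfl, zero_le_one⟩
        have hnn := (hP.1 0 h01).1
        rw [hP.2.2.2.1] at hnn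
        linarith
      exact top_unique (le_iInf fun P => le_iInf fun h => (hempty P h).elim)
    have hA1 : A ≤ ENNReal.ofReal 1 := by
      obtain ⟨Q, ha0, ha1, hb0, hb1, hrange, hE⟩ :=
        SurfAux.extend_exists (SurfAux.triv s) 0 1 hf
          (fun t _ => ⟨le_rfl, zero_le_one⟩) ⟨le_rfl, zero_le_one⟩ ⟨zero_le_one, le_rfl⟩ rfl rfl
      have hQadm : Q.Admissible s := by
        refine ⟨hrange, ?_, ?_, hb0, hb1⟩
        · rw [ha0]; show s * 0 = 0; ring
        · rw [ha1]; show s * 1 = s; ring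
      refine le_trans (iInf₂_le Q hQadm) ?_
      rw [hE, SurfAux.triv_energy hf s, zero_add]
      norm_num
    have hAtoReal : A.toReal ≤ 1 :=
      le_trans (ENNReal.toReal_mono ENNReal.ofReal_ne_top hA1) (by norm_num)
    have hB0 : B.toReal = 0 := by rw [hBtop]; simp
    rw [hB0, sub_zero, abs_of_nonneg ENNReal.toReal_nonneg]
    nlinarith
end

section
/- Let (f_j) be a sequence of admissible damage functions, each with the same limit value ℓ ∈ (0,∞) of (1−s)f_j(s) as s → 1⁻, such that f_j ≥ f_{j+1} pointwise and f_j(s) ↓ 0 for every s ∈ [0,1). Then the corresponding surface energy densities satisfy g_j ≥ g_{j+1} pointwise and g_j(s) ↓ 0 for every s ∈ [0,∞). -/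
open MeasureTheory Set Filter Topology

noncomputable def dbF (m : ℝ) (t : ℝ) : ℝ := if t ≤ 1/3 then -m else if t ≤ 2/3 then 0 else m
noncomputable def daF (s : ℝ) (t : ℝ) : ℝ := if t ≤ 1/3 then 0 else if t ≤ 2/3 then 3*s else 0

lemma measurable_dbF (m : ℝ) : Measurable (dbF m) := by
  unfold dbF
  exact Measurable.ite (measurableSet_le measurable_id measurable_const) measurable_const
    (Measurable.ite (measurableSet_le measurable_id measurable_const) measurable_const measurable_const)

lemma measurable_daF (s : ℝ) : Measurable (daF s) := by
  unfold daF
  exact Measurable.ite (measurableSet_le measurable_id measurable_const) measurable_const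
    (Measurable.ite (measurableSet_le measurable_id measurable_const) measurable_const measurable_const)

lemma dbF_bound (m t : ℝ) : ‖dbF m t‖ ≤ |m| := by
  unfold dbF; split_ifs <;> simp [Real.norm_eq_abs, abs_nonneg]

lemma daF_bound (s t : ℝ) : ‖daF s t‖ ≤ |3*s| := by
  unfold daF; split_ifs <;> simp [Real.norm_eq_abs, abs_nonneg, abs_mul]

lemma integrableOn_dbF (m : ℝ) {u v : ℝ} : IntegrableOn (dbF m) (Ioc u v) := by
  apply Measure.integrableOn_of_bounded (by simp [Real.volume_Ioc])
    (measurable_dbF m).aestronglyMeasurable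
  exact ae_of_all _ (fun t => dbF_bound m t)

lemma integrableOn_daF (s : ℝ) {u v : ℝ} : IntegrableOn (daF s) (Ioc u v) := by
  apply Measure.integrableOn_of_bounded (by simp [Real.volume_Ioc])
    (measurable_daF s).aestronglyMeasurable
  exact ae_of_all _ (fun t => daF_bound s t)

lemma vol_Ioc {u v : ℝ} (h : u ≤ v) : (volume (Ioc u v)).toReal = v - u := by
  rw [Real.volume_Ioc, ENNReal.toReal_ofReal (by linarith)]

lemma setInt_const_eqOn {f : ℝ → ℝ} {u v C : ℝ} (h : u ≤ v)
    (heq : EqOn f (fun _ => C) (Ioc u v)) :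
    ∫ t in Ioc u v, f t = C * (v - u) := by
  rw [setIntegral_congr_fun measurableSet_Ioc heq, setIntegral_const, smul_eq_mul, measureReal_def, vol_Ioc h,
    mul_comm]

lemma int_dbF (m : ℝ) {x : ℝ} (hx : x ∈ Icc (0:ℝ) 1) :
    ∫ t in Ioc (0:ℝ) x, dbF m t = -(m * min x (1/3)) + m * max (x - 2/3) 0 := by
  obtain ⟨hx0, hx1⟩ := hx
  rcases le_or_gt x (1/3) with h1 | h1
  · have e0 : ∫ t in Ioc (0:ℝ) x, dbF m t = -m * (x - 0) :=
      setInt_const_eqOn hx0 (fun t ht => by simp only [dbF, if_pos (le_trans ht.2 h1)])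
    rw [e0, min_eq_left h1, max_eq_right (by linarith)]
    ring
  · have e1 : ∫ t in Ioc (0:ℝ) (1/3), dbF m t = -m * (1/3 - 0) :=
      setInt_const_eqOn (by norm_num) (fun t ht => by simp only [dbF, if_pos ht.2])
    rcases le_or_gt x (2/3) with h2 | h2
    · have hsplit : Ioc (0:ℝ) x = Ioc 0 (1/3) ∪ Ioc (1/3) x :=
        (Ioc_union_Ioc_eq_Ioc (by norm_num) h1.le).symm
      have e2 : ∫ t in Ioc (1/3:ℝ) x, dbF m t = 0 * (x - 1/3) :=
        setInt_const_eqOn h1.le (fun t ht => by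
          simp only [dbF, if_neg (not_le.2 ht.1), if_pos (le_trans ht.2 h2)])
      rw [hsplit, setIntegral_union (Ioc_disjoint_Ioc_of_le le_rfl) measurableSet_Ioc
        (integrableOn_dbF m) (integrableOn_dbF m), e1, e2,
        min_eq_right h1.le, max_eq_right (by linarith)]
      ring
    · have hsplit : Ioc (0:ℝ) x = Ioc 0 (1/3) ∪ (Ioc (1/3) (2/3) ∪ Ioc (2/3) x) := by
        rw [Ioc_union_Ioc_eq_Ioc (by norm_num) h2.le,
          Ioc_union_Ioc_eq_Ioc (by norm_num) (by linarith)]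
      have e2 : ∫ t in Ioc (1/3:ℝ) (2/3), dbF m t = 0 * (2/3 - 1/3) :=
        setInt_const_eqOn (by norm_num) (fun t ht => by
          simp only [dbF, if_neg (not_le.2 ht.1), if_pos ht.2])
      have e3 : ∫ t in Ioc (2/3:ℝ) x, dbF m t = m * (x - 2/3) :=
        setInt_const_eqOn h2.le (fun t ht => by
          simp only [dbF, if_neg (not_le.2 (by linarith [ht.1] : (1:ℝ)/3 < t)),
            if_neg (not_le.2 ht.1)])
      rw [hsplit, setIntegral_union ?disj (measurableSet_Ioc.union measurableSet_Ioc)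
        (integrableOn_dbF m) ((integrableOn_dbF m).union (integrableOn_dbF m)),
        setIntegral_union (Ioc_disjoint_Ioc_of_le le_rfl) measurableSet_Ioc
        (integrableOn_dbF m) (integrableOn_dbF m), e1, e2, e3,
        min_eq_right h1.le, max_eq_left (by linarith)]
      · ring
      case disj =>
        refine Disjoint.union_right (Ioc_disjoint_Ioc_of_le le_rfl) ?_
        exact Set.Ioc_disjoint_Ioc.2 (by norm_num)

lemma int_daF (s : ℝ) : ∫ t in Ioc (0:ℝ) 1, daF s t = s := by
  have hsplit : Ioc (0:ℝ) 1 = Ioc 0 (1/3) ∪ (Ioc (1/3) (2/3) ∪ Ioc (2/3) 1) := by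
    rw [Ioc_union_Ioc_eq_Ioc (by norm_num) (by norm_num),
      Ioc_union_Ioc_eq_Ioc (by norm_num) (by norm_num)]
  have e1 : ∫ t in Ioc (0:ℝ) (1/3), daF s t = 0 * (1/3 - 0) :=
    setInt_const_eqOn (by norm_num) (fun t ht => by simp only [daF, if_pos ht.2])
  have e2 : ∫ t in Ioc (1/3:ℝ) (2/3), daF s t = (3*s) * (2/3 - 1/3) :=
    setInt_const_eqOn (by norm_num) (fun t ht => by
      simp only [daF, if_neg (not_le.2 ht.1), if_pos ht.2])
  have e3 : ∫ t in Ioc (2/3:ℝ) 1, daF s t = 0 * (1 - 2/3) :=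
    setInt_const_eqOn (by norm_num) (fun t ht => by
      simp only [daF, if_neg (not_le.2 (by linarith [ht.1] : (1:ℝ)/3 < t)),
        if_neg (not_le.2 ht.1)])
  rw [hsplit, setIntegral_union ?disj (measurableSet_Ioc.union measurableSet_Ioc)
    (integrableOn_daF s) ((integrableOn_daF s).union (integrableOn_daF s)),
    setIntegral_union (Ioc_disjoint_Ioc_of_le le_rfl) measurableSet_Ioc
    (integrableOn_daF s) (integrableOn_daF s), e1, e2, e3]
  · ring
  case disj =>
    refine Disjoint.union_right (Ioc_disjoint_Ioc_of_le le_rfl) ?_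
    exact Set.Ioc_disjoint_Ioc.2 (by norm_num)

/-! ### Auxiliary constructions -/

/-- Trivial competitor: `α(t) = s t`, `β ≡ 1`. -/
noncomputable def trivPair (s : ℝ) : H1Pair 1 where
  a := fun x => s * x
  b := fun _ => 1
  da := fun _ => s
  db := fun _ => 0
  da_mem := memLp_const s
  db_mem := memLp_const 0
  a_ftc := by
    intro x hx
    rw [setIntegral_const, smul_eq_mul, measureReal_def, vol_Ioc hx.1]
    ring
  b_ftc := by intro x hx; simp

lemma trivPair_admissible (s : ℝ) : (trivPair s).Admissible s := by
  refine ⟨fun t _ => ⟨zero_le_one, le_refl 1⟩, ?_, ?_, rfl, rfl⟩ <;> simp [trivPair]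

lemma trivPair_energy (f : ℝ → ℝ) (l s : ℝ) :
    surfEnergy f l (trivPair s) = ENNReal.ofReal |l * s| := by
  unfold surfEnergy
  have h : ∀ t : ℝ, Real.sqrt ((damageExt f l ((trivPair s).b t))^2 * ((trivPair s).da t)^2
      + (1 - (trivPair s).b t)^2 * ((trivPair s).db t)^2) = |l * s| := by
    intro t
    have hd : damageExt f l ((trivPair s).b t) = l := by
      show damageExt f l 1 = l
      rw [damageExt, if_pos rfl]
    have hb : (1:ℝ) - (trivPair s).b t = 0 := sub_self 1
    have hda : (trivPair s).da t = s := rfl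
    have hdb : (trivPair s).db t = 0 := rfl
    rw [hd, hb, hda, hdb, show l^2 * s^2 + 0^2 * 0^2 = (l*s)^2 by ring,
      Real.sqrt_sq_eq_abs]
  simp only [h]
  rw [setLIntegral_const, Real.volume_Ioo]
  norm_num

lemma surfEnergy_iInf_ne_top (f : ℝ → ℝ) (l s : ℝ) :
    (⨅ (P : H1Pair 1) (_ : P.Admissible s), surfEnergy f l P) ≠ ⊤ := by
  refine ne_top_of_le_ne_top ?_ (iInf₂_le (trivPair s) (trivPair_admissible s))
  rw [trivPair_energy]
  exact ENNReal.ofReal_ne_top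

/-- Monotonicity of the surface energy in the damage function. -/
lemma surfEnergy_mono {f1 f2 : ℝ → ℝ} {l : ℝ}
    (h0 : ∀ x ∈ Icc (0:ℝ) 1, 0 ≤ damageExt f2 l x)
    (h12 : ∀ x ∈ Icc (0:ℝ) 1, damageExt f2 l x ≤ damageExt f1 l x)
    {P : H1Pair 1} (hP : ∀ t ∈ Icc (0:ℝ) 1, P.b t ∈ Icc (0:ℝ) 1) :
    surfEnergy f2 l P ≤ surfEnergy f1 l P := by
  apply lintegral_mono_ae
  rw [ae_restrict_iff' measurableSet_Ioo]
  filter_upwards with t ht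
  apply ENNReal.ofReal_le_ofReal
  apply Real.sqrt_le_sqrt
  have hb := hP t ⟨ht.1.le, ht.2.le⟩
  have h2 := h0 _ hb
  have h3 := h12 _ hb
  have h4 : damageExt f2 l (P.b t)^2 ≤ damageExt f1 l (P.b t)^2 := by nlinarith
  have h5 := mul_le_mul_of_nonneg_right h4 (sq_nonneg (P.da t))
  linarith

/-- The three-piece competitor with damage level `c`. -/
noncomputable def stepPair (c s : ℝ) : H1Pair 1 where
  a := fun x => ∫ t in Ioc (0:ℝ) x, daF s t
  b := fun x => 1 + ∫ t in Ioc (0:ℝ) x, dbF (3*(1-c)) t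
  da := daF s
  db := dbF (3*(1-c))
  da_mem := MemLp.of_bound (measurable_daF s).aestronglyMeasurable |3*s|
    (ae_of_all _ (fun t => daF_bound s t))
  db_mem := MemLp.of_bound (measurable_dbF (3*(1-c))).aestronglyMeasurable |3*(1-c)|
    (ae_of_all _ (fun t => dbF_bound (3*(1-c)) t))
  a_ftc := by intro x hx; simp [Set.Ioc_self]
  b_ftc := by intro x hx; simp [Set.Ioc_self]

lemma stepPair_b (c s : ℝ) {x : ℝ} (hx : x ∈ Icc (0:ℝ) 1) :
    (stepPair c s).b x = 1 - (3*(1-c)) * min x (1/3) + (3*(1-c)) * max (x - 2/3) 0 := by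
  show 1 + ∫ t in Ioc (0:ℝ) x, dbF (3*(1-c)) t = _
  rw [int_dbF _ hx]; ring

lemma stepPair_admissible {c s : ℝ} (hc0 : 0 ≤ c) (hc1 : c ≤ 1) :
    (stepPair c s).Admissible s := by
  set m := 3*(1-c) with hm
  have hm0 : 0 ≤ m := by rw [hm]; linarith
  refine ⟨?_, ?_, ?_, ?_, ?_⟩
  · intro t ht
    rw [stepPair_b c s ht]
    constructor
    · have h1 : min t (1/3) ≤ 1/3 := min_le_right _ _
      have h2 : 0 ≤ max (t - 2/3) 0 := le_max_right _ _
      nlinarith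
    · rcases le_or_gt t (2/3) with h | h
      · rw [max_eq_right (by linarith)]
        have h1 : 0 ≤ min t (1/3) := le_min ht.1 (by norm_num)
        nlinarith
      · rw [max_eq_left (by linarith), min_eq_right (by linarith)]
        nlinarith [ht.2]
  · show (∫ t in Ioc (0:ℝ) (0:ℝ), daF s t) = 0
    simp [Set.Ioc_self]
  · show (∫ t in Ioc (0:ℝ) (1:ℝ), daF s t) = s
    exact int_daF s
  · show 1 + (∫ t in Ioc (0:ℝ) (0:ℝ), dbF m t) = 1
    simp [Set.Ioc_self]
  · rw [stepPair_b c s (by norm_num : (1:ℝ) ∈ Icc (0:ℝ) 1)]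
    rw [min_eq_right (by norm_num), max_eq_left (by norm_num)]
    ring

set_option maxHeartbeats 2000000 in
lemma stepPair_energy {f : ℝ → ℝ} {l c s : ℝ} (hc0 : 0 ≤ c) (hc1 : c < 1) (hs : 0 ≤ s)
    (hfc : 0 ≤ f c) :
    surfEnergy f l (stepPair c s) ≤ ENNReal.ofReal (3*(1-c)^2 + 3*(1-c)*(f c)*s) := by
  set m := 3*(1-c) with hm
  have hm0 : 0 ≤ m := by rw [hm]; linarith
  set C := 3*(1-c)^2 + 3*(1-c)*(f c)*s with hC
  have hterm1 : 0 ≤ 3*(1-c)^2 := by positivity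
  have hterm2 : 0 ≤ 3*(1-c)*(f c)*s := by
    apply mul_nonneg (mul_nonneg (by linarith) hfc) hs
  have hpt : ∀ t ∈ Ioo (0:ℝ) 1,
      Real.sqrt ((damageExt f l ((stepPair c s).b t))^2 * ((stepPair c s).da t)^2
        + (1 - (stepPair c s).b t)^2 * ((stepPair c s).db t)^2) ≤ C := by
    intro t ht
    have htI : t ∈ Icc (0:ℝ) 1 := ⟨ht.1.le, ht.2.le⟩
    have hbt := stepPair_b c s htI
    have hda : (stepPair c s).da = daF s := rfl
    have hdb : (stepPair c s).db = dbF m := rfl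
    rcases le_or_gt t (1/3) with h1 | h1
    · have hda0 : (stepPair c s).da t = 0 := by rw [hda]; simp only [daF, if_pos h1]
      have hdbm : (stepPair c s).db t = -m := by rw [hdb]; simp only [dbF, if_pos h1]
      have hbv : (stepPair c s).b t = 1 - m * t := by
        rw [hbt, min_eq_left h1, max_eq_right (by linarith)]; ring
      rw [hda0, hdbm, hbv]
      have h2 : 0 ≤ m * t := mul_nonneg hm0 ht.1.le
      have h3 : m * t ≤ 1 - c := by
        have h' : m * t ≤ m * (1/3) := mul_le_mul_of_nonneg_left h1 hm0
        rw [hm] at h' ⊢; linarith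
      have key : (damageExt f l (1 - m*t))^2 * 0^2 + (1 - (1 - m*t))^2 * (-m)^2
          ≤ ((1-c)*m)^2 := by
        have e : (damageExt f l (1 - m*t))^2 * 0^2 + (1 - (1 - m*t))^2 * (-m)^2
            = (m*t)^2 * m^2 := by ring
        rw [e]
        nlinarith [mul_nonneg (mul_nonneg (sub_nonneg.2 h3)
          (by linarith : (0:ℝ) ≤ (1-c) + m*t)) (sq_nonneg m)]
      have s1 : Real.sqrt ((damageExt f l (1 - m*t))^2 * 0^2 + (1 - (1 - m*t))^2 * (-m)^2)
          ≤ (1-c)*m := by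
        rw [← Real.sqrt_sq (mul_nonneg (by linarith : (0:ℝ) ≤ 1-c) hm0)]
        exact Real.sqrt_le_sqrt key
      refine le_trans s1 ?_
      rw [hC, hm]; nlinarith [hterm2]
    · rcases le_or_gt t (2/3) with h2 | h2
      · have hda3 : (stepPair c s).da t = 3*s := by
          rw [hda]; simp only [daF, if_neg (not_le.2 h1), if_pos h2]
        have hdb0 : (stepPair c s).db t = 0 := by
          rw [hdb]; simp only [dbF, if_neg (not_le.2 h1), if_pos h2]
        have hbv : (stepPair c s).b t = c := by
          rw [hbt, min_eq_right h1.le, max_eq_right (by linarith)]; ring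
        rw [hda3, hdb0, hbv]
        have hdc : damageExt f l c = (1-c) * f c := by
          rw [damageExt, if_neg (ne_of_lt hc1)]
        rw [hdc]
        have key : ((1-c) * f c)^2 * (3*s)^2 + (1 - c)^2 * 0^2 = ((1-c) * f c * (3*s))^2 := by
          ring
        rw [key, Real.sqrt_sq (mul_nonneg (mul_nonneg (by linarith) hfc) (by linarith))]
        rw [hC]; nlinarith [hterm1]
      · have hda0 : (stepPair c s).da t = 0 := by
          rw [hda]; simp only [daF, if_neg (not_le.2 h1), if_neg (not_le.2 h2)]
        have hdbm : (stepPair c s).db t = m := by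
          rw [hdb]; simp only [dbF, if_neg (not_le.2 h1), if_neg (not_le.2 h2)]
        have hbv : (stepPair c s).b t = 1 - m * (1/3) + m * (t - 2/3) := by
          rw [hbt, min_eq_right h1.le, max_eq_left (by linarith)]
        rw [hda0, hdbm, hbv]
        have h3 : 0 ≤ m * (1/3) - m * (t - 2/3) := by nlinarith [ht.2]
        have h4 : m * (1/3) - m * (t - 2/3) ≤ 1 - c := by
          have h' : m * (1/3) - m * (t - 2/3) ≤ m * (1/3) := by nlinarith
          rw [hm] at h' ⊢; linarith
        have key : (damageExt f l (1 - m*(1/3) + m*(t-2/3)))^2 * 0^2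
            + (1 - (1 - m*(1/3) + m*(t-2/3)))^2 * m^2 ≤ ((1-c)*m)^2 := by
          have e : (damageExt f l (1 - m*(1/3) + m*(t-2/3)))^2 * 0^2
              + (1 - (1 - m*(1/3) + m*(t-2/3)))^2 * m^2
              = (m*(1/3) - m*(t-2/3))^2 * m^2 := by ring
          rw [e]
          nlinarith [mul_nonneg (mul_nonneg (sub_nonneg.2 h4)
            (by linarith : (0:ℝ) ≤ (1-c) + (m*(1/3) - m*(t-2/3)))) (sq_nonneg m)]
        have s1 : Real.sqrt ((damageExt f l (1 - m*(1/3) + m*(t-2/3)))^2 * 0^2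
            + (1 - (1 - m*(1/3) + m*(t-2/3)))^2 * m^2) ≤ (1-c)*m := by
          rw [← Real.sqrt_sq (mul_nonneg (by linarith : (0:ℝ) ≤ 1-c) hm0)]
          exact Real.sqrt_le_sqrt key
        refine le_trans s1 ?_
        rw [hC, hm]; nlinarith [hterm2]
  unfold surfEnergy
  calc ∫⁻ t in Ioo (0:ℝ) 1, ENNReal.ofReal (Real.sqrt ((damageExt f l ((stepPair c s).b t))^2
        * ((stepPair c s).da t)^2 + (1 - (stepPair c s).b t)^2 * ((stepPair c s).db t)^2))
      ≤ ∫⁻ _ in Ioo (0:ℝ) 1, ENNReal.ofReal C := by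
        apply lintegral_mono_ae
        rw [ae_restrict_iff' measurableSet_Ioo]
        filter_upwards with t ht
        exact ENNReal.ofReal_le_ofReal (hpt t ht)
    _ = ENNReal.ofReal C := by
        rw [setLIntegral_const, Real.volume_Ioo]
        norm_num

lemma surfDensity_le_step {f : ℝ → ℝ} {l c s : ℝ} (hc0 : 0 ≤ c) (hc1 : c < 1) (hs : 0 ≤ s)
    (hfc : 0 ≤ f c) :
    surfDensity f l s ≤ 3*(1-c)^2 + 3*(1-c)*(f c)*s := by
  apply ENNReal.toReal_le_of_le_ofReal
  · have : 0 ≤ 3*(1-c)*(f c)*s := mul_nonneg (mul_nonneg (by nlinarith) hfc) hs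
    nlinarith
  · exact le_trans (iInf₂_le (stepPair c s) (stepPair_admissible hc0 hc1.le))
      (stepPair_energy hc0 hc1 hs hfc)
/-- If `(f_j)` is a sequence of admissible damage functions with the
same limit value `ℓ`, `f_j ≥ f_{j+1}` pointwise on `[0,1)`, and `f_j(s) ↓ 0` for every
`s ∈ [0,1)`, then the surface energy densities satisfy `g_j ≥ g_{j+1}` pointwise and
`g_j(s) ↓ 0` for every `s ∈ [0,∞)`. -/
theorem surfDensity_seq_decreasing (F : ℕ → ℝ → ℝ) (l : ℝ)
    (hadm : ∀ j, AdmissibleDamage (F j) l)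
    (hmono : ∀ j, ∀ x ∈ Set.Ico (0:ℝ) 1, F (j+1) x ≤ F j x)
    (hlim : ∀ x ∈ Set.Ico (0:ℝ) 1,
      Filter.Tendsto (fun j => F j x) Filter.atTop (nhds 0)) :
    (∀ j, ∀ s : ℝ, 0 ≤ s → surfDensity (F (j+1)) l s ≤ surfDensity (F j) l s) ∧
    (∀ s : ℝ, 0 ≤ s →
      Filter.Tendsto (fun j => surfDensity (F j) l s) Filter.atTop (nhds 0)) := by
  constructor
  · intro j s hs
    obtain ⟨_, _, hpos1, _, hl, _⟩ := hadm (j+1)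
    unfold surfDensity
    apply ENNReal.toReal_mono (surfEnergy_iInf_ne_top (F j) l s)
    apply le_iInf₂
    intro P hP
    refine le_trans (iInf₂_le P hP) (surfEnergy_mono ?_ ?_ hP.1)
    · intro x hx
      by_cases hx1 : x = 1
      · rw [damageExt, if_pos hx1]; exact hl.le
      · rw [damageExt, if_neg hx1]
        have hxI : x ∈ Ico (0:ℝ) 1 := ⟨hx.1, lt_of_le_of_ne hx.2 hx1⟩
        exact mul_nonneg (by linarith [hxI.2.le]) (hpos1 x hxI)
    · intro x hx
      by_cases hx1 : x = 1
      · rw [damageExt, damageExt, if_pos hx1, if_pos hx1]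
      · rw [damageExt, damageExt, if_neg hx1, if_neg hx1]
        have hxI : x ∈ Ico (0:ℝ) 1 := ⟨hx.1, lt_of_le_of_ne hx.2 hx1⟩
        exact mul_le_mul_of_nonneg_left (hmono j x hxI) (by linarith [hxI.2])
  · intro s hs
    rw [Metric.tendsto_atTop]
    intro ε hε
    have hsq : 0 < Real.sqrt ε := Real.sqrt_pos.2 hε
    set δ := min (1/2) (Real.sqrt ε / 3) with hδ
    have hδ0 : 0 < δ := lt_min (by norm_num) (by positivity)
    have hδ1 : δ ≤ 1/2 := min_le_left _ _
    have hδ2 : δ ≤ Real.sqrt ε / 3 := min_le_right _ _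
    set c := 1 - δ with hc
    have hc0 : 0 ≤ c := by rw [hc]; linarith
    have hc1 : c < 1 := by rw [hc]; linarith
    have h1c : 1 - c = δ := by rw [hc]; ring
    have h3c : 3*(1-c)^2 < ε/2 := by
      rw [h1c]
      nlinarith [Real.sq_sqrt hε.le, hδ0.le, hδ2, hsq]
    have hcI : c ∈ Ico (0:ℝ) 1 := ⟨hc0, hc1⟩
    have hF := hlim c hcI
    have hterm : Tendsto (fun j => 3*(1-c)*(F j c)*s) atTop (nhds 0) := by
      have h' := (hF.const_mul (3*(1-c))).mul_const s
      simpa using h'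
    obtain ⟨N, hN⟩ := Metric.tendsto_atTop.1 hterm (ε/6) (by linarith)
    refine ⟨N, fun n hn => ?_⟩
    have hfc : 0 ≤ F n c := (hadm n).2.2.1 c hcI
    have hle := surfDensity_le_step (f := F n) (l := l) hc0 hc1 hs hfc
    have h2 := hN n hn
    rw [Real.dist_eq, sub_zero] at h2
    rw [Real.dist_eq, sub_zero]
    have h3 : 3*(1-c)*(F n c)*s < ε/6 := lt_of_le_of_lt (le_abs_self _) h2
    have hg0 : 0 ≤ surfDensity (F n) l s := ENNReal.toReal_nonneg
    rw [abs_of_nonneg hg0]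
    calc surfDensity (F n) l s ≤ 3*(1-c)^2 + 3*(1-c)*(F n c)*s := hle
      _ < ε/2 + ε/6 := by linarith
      _ < ε := by linarith
end

section
/- Let (f_j) be a sequence of admissible damage functions, each with the same limit value ℓ ∈ (0,∞) of (1−s)f_j(s) as s → 1⁻, such that f_j ≤ f_{j+1} pointwise and f_j(s) ↑ ∞ for every s ∈ (0,1). Then the corresponding surface energy densities satisfy g_j ≤ g_{j+1} pointwise and g_j(s) ↑ min(1, ℓ s) for every s ∈ [0,∞). -/
open MeasureTheory Set Filter Topology

instance ioo_fin (a b : ℝ) : IsFiniteMeasure (volume.restrict (Ioo a b)) :=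
  ⟨by simp [Real.volume_Ioo]⟩
instance ioc_fin (a b : ℝ) : IsFiniteMeasure (volume.restrict (Ioc a b)) :=
  ⟨by simp [Real.volume_Ioc]⟩
instance icc_fin (a b : ℝ) : IsFiniteMeasure (volume.restrict (Icc a b)) :=
  ⟨by simp [Real.volume_Icc]⟩

lemma memℒp2_of_bounded {g : ℝ → ℝ} (hm : Measurable g) (C : ℝ) (hC : ∀ t, |g t| ≤ C) :
    MemLp g 2 (volume.restrict (Ioo (0:ℝ) 1)) :=
  MemLp.of_bound hm.aestronglyMeasurable C (Filter.Eventually.of_forall (by simpa using hC))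

lemma integrableOn_of_bounded {g : ℝ → ℝ} {u v : ℝ} (hm : Measurable g) (C : ℝ)
    (hC : ∀ t, |g t| ≤ C) : IntegrableOn g (Ioc u v) :=
  memLp_one_iff_integrable.1
    (MemLp.of_bound hm.aestronglyMeasurable C (Filter.Eventually.of_forall (by simpa using hC)))

open intervalIntegral in
lemma ii_of_le {f : ℝ → ℝ} {a b : ℝ} (h : a ≤ b) :
    (∫ x in a..b, f x) = ∫ x in Ioc a b, f x := integral_of_le h

open intervalIntegral in
lemma ii_id (a b : ℝ) : (∫ x in a..b, x) = (b^2 - a^2)/2 := integral_id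

open intervalIntegral in
lemma ii_one_sub (a b : ℝ) : (∫ x in a..b, (1 - x)) = (b - a) - (b^2 - a^2)/2 := by
  rw [integral_sub intervalIntegrable_const intervalIntegrable_id, integral_id]
  norm_num

lemma int_const_Ioc (c u v : ℝ) (h : u ≤ v) : (∫ t in Ioc u v, c) = c * (v - u) := by
  simp [Real.volume_Ioc, ENNReal.toReal_ofReal (by linarith : (0:ℝ) ≤ v - u)]
  rw [max_eq_left (by linarith : (0:ℝ) ≤ v - u)]
  ring
lemma half_square {D : ℝ → ℝ} {u v : ℝ} (hD : IntegrableOn D (Ioc u v)) :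
    (∫ t in Ioc u v, (∫ r in Ioc u t, D r) * D t)
      = (∫ t in Ioc u v, D t) ^ 2 / 2 := by
  set μ := volume.restrict (Ioc u v) with hμ
  set g : ℝ × ℝ → ℝ := fun p => D p.1 * D p.2 with hg
  have hgint : Integrable g (μ.prod μ) := Integrable.mul_prod hD hD
  have hm1 : MeasurableSet {p : ℝ × ℝ | p.2 ≤ p.1} :=
    measurableSet_le measurable_snd measurable_fst
  have hm2 : MeasurableSet {p : ℝ × ℝ | p.1 ≤ p.2} :=
    measurableSet_le measurable_fst measurable_snd
  have h1 : Integrable ({p : ℝ × ℝ | p.2 ≤ p.1}.indicator g) (μ.prod μ) :=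
    hgint.indicator hm1
  have h2 : Integrable ({p : ℝ × ℝ | p.1 ≤ p.2}.indicator g) (μ.prod μ) :=
    hgint.indicator hm2
  -- the diagonal is null
  have hdiag : (μ.prod μ) {p : ℝ × ℝ | p.1 = p.2} = 0 := by
    have hmd : MeasurableSet {p : ℝ × ℝ | p.1 = p.2} :=
      measurableSet_eq_fun measurable_fst measurable_snd
    rw [Measure.prod_apply hmd]
    have : ∀ x : ℝ, μ (Prod.mk x ⁻¹' {p : ℝ × ℝ | p.1 = p.2}) = 0 := by
      intro x
      have : (Prod.mk x ⁻¹' {p : ℝ × ℝ | p.1 = p.2}) = {x} := by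
        ext y; simp [eq_comm]
      rw [this, hμ]
      exact le_antisymm ((Measure.restrict_le_self _).trans_eq (Real.volume_singleton)) (by simp)
    simp [this]
  -- swap symmetry
  have hswap : (∫ p, ({p : ℝ × ℝ | p.2 ≤ p.1}.indicator g) p ∂(μ.prod μ))
      = ∫ p, ({p : ℝ × ℝ | p.1 ≤ p.2}.indicator g) p ∂(μ.prod μ) := by
    rw [← integral_prod_swap]
    congr 1
    ext p
    by_cases hp : p.1 ≤ p.2
    · simp [Set.indicator, hp, hg, mul_comm]
    · simp [Set.indicator, hp, hg]
  -- sum identity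
  have hsum : (∫ p, ({p : ℝ × ℝ | p.2 ≤ p.1}.indicator g) p ∂(μ.prod μ))
      + (∫ p, ({p : ℝ × ℝ | p.1 ≤ p.2}.indicator g) p ∂(μ.prod μ))
      = ∫ p, g p ∂(μ.prod μ) := by
    rw [← integral_add h1 h2]
    apply integral_congr_ae
    have hae : ∀ᵐ p ∂(μ.prod μ), ¬ (p : ℝ × ℝ).1 = p.2 := by
      rw [ae_iff]; simpa using hdiag
    filter_upwards [hae] with p hp
    rcases le_total p.2 p.1 with h | h
    · have h' : ¬ p.1 ≤ p.2 := fun hle => hp (le_antisymm hle h)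
      simp [Set.indicator, h, h']
    · have h' : ¬ p.2 ≤ p.1 := fun hle => hp (le_antisymm h hle)
      simp [Set.indicator, h, h']
  have hprod : (∫ p, g p ∂(μ.prod μ)) = (∫ t in Ioc u v, D t) ^ 2 := by
    rw [hg]
    rw [integral_prod_mul]
    rw [sq]
  -- evaluate the lower-triangle integral by Fubini
  have heval : (∫ p, ({p : ℝ × ℝ | p.2 ≤ p.1}.indicator g) p ∂(μ.prod μ))
      = ∫ t in Ioc u v, (∫ r in Ioc u t, D r) * D t := by
    rw [integral_prod _ h1]
    apply integral_congr_ae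
    filter_upwards [ae_restrict_mem measurableSet_Ioc] with t ht
    have : (fun r => ({p : ℝ × ℝ | p.2 ≤ p.1}.indicator g) (t, r))
        = (Iic t).indicator (fun r => D t * D r) := by
      ext r
      by_cases hr : r ≤ t <;> simp [Set.indicator, hr, hg]
    rw [this, integral_indicator measurableSet_Iic]
    rw [hμ, Measure.restrict_restrict measurableSet_Iic]
    have hset : Iic t ∩ Ioc u v = Ioc u t := by
      ext r
      simp only [mem_inter_iff, mem_Iic, mem_Ioc]
      exact ⟨fun ⟨h1, h2, h3⟩ => ⟨h2, h1⟩, fun ⟨h1, h2⟩ => ⟨h2, h1, h2.trans ht.2⟩⟩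
    rw [hset, integral_const_mul, mul_comm]
  rw [← heval]
  have := hsum
  rw [← hswap, hprod] at this
  linarith

lemma H1Pair.da_int (P : H1Pair 1) : IntegrableOn P.da (Ioo (0:ℝ) 1) :=
  P.da_mem.integrable one_le_two

lemma H1Pair.db_int (P : H1Pair 1) : IntegrableOn P.db (Ioo (0:ℝ) 1) :=
  P.db_mem.integrable one_le_two

lemma integrableOn_sub {f : ℝ → ℝ} (h : IntegrableOn f (Ioo (0:ℝ) 1)) {u v : ℝ}
    (hu : 0 ≤ u) (hv : v ≤ 1) : IntegrableOn f (Ioc u v) := by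
  have h1 : volume.restrict (Ioc u v) = volume.restrict (Ioo u v) :=
    (Measure.restrict_congr_set Ioo_ae_eq_Ioc).symm
  unfold IntegrableOn
  rw [h1]
  exact h.mono_set (Ioo_subset_Ioo hu hv)

lemma H1Pair.b_sub (P : H1Pair 1) {u v : ℝ} (hu : u ∈ Icc (0:ℝ) 1) (hv : v ∈ Icc (0:ℝ) 1)
    (huv : u ≤ v) : P.b v = P.b u + ∫ t in Ioc u v, P.db t := by
  rw [P.b_ftc v hv, P.b_ftc u hu]
  have hun : Ioc (0:ℝ) u ∪ Ioc u v = Ioc 0 v := Ioc_union_Ioc_eq_Ioc hu.1 huv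
  rw [← hun, setIntegral_union (Set.Ioc_disjoint_Ioc_of_le le_rfl) measurableSet_Ioc
    (integrableOn_sub P.db_int le_rfl hu.2) (integrableOn_sub P.db_int hu.1 hv.2)]
  ring

lemma H1Pair.b_cont (P : H1Pair 1) : ContinuousOn P.b (Icc (0:ℝ) 1) := by
  have hi : IntegrableOn P.db (Icc (0:ℝ) 1) := by
    unfold IntegrableOn
    rw [(Measure.restrict_congr_set Ioo_ae_eq_Icc).symm]
    exact P.db_int
  exact (continuousOn_const.add (intervalIntegral.continuousOn_primitive hi)).congr
    fun x hx => P.b_ftc x hx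

lemma H1Pair.one_sub_b_mul_db_int (P : H1Pair 1)
    (hb : ∀ t ∈ Icc (0:ℝ) 1, P.b t ∈ Icc (0:ℝ) 1) {u v : ℝ}
    (hu : 0 ≤ u) (hv : v ≤ 1) :
    IntegrableOn (fun t => (1 - P.b t) * P.db t) (Ioc u v) := by
  rcases le_or_gt u v with huv | huv
  · have hD := integrableOn_sub P.db_int hu hv
    apply Integrable.mono' hD.abs
    · exact ((continuousOn_const.sub (P.b_cont.mono (Ioc_subset_Icc_self.trans
        (Icc_subset_Icc hu hv)))).aestronglyMeasurable measurableSet_Ioc).mul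
        hD.aestronglyMeasurable
    · filter_upwards [ae_restrict_mem measurableSet_Ioc] with t ht
      have hbt := hb t ⟨hu.trans ht.1.le, ht.2.trans hv⟩
      have h1 : |1 - P.b t| ≤ 1 := by
        rw [abs_le]; exact ⟨by linarith [hbt.2], by linarith [hbt.1]⟩
      calc ‖(1 - P.b t) * P.db t‖ = |1 - P.b t| * |P.db t| := abs_mul _ _
        _ ≤ 1 * |P.db t| := mul_le_mul_of_nonneg_right h1 (abs_nonneg _)
        _ = |P.db t| := one_mul _
  · rw [Set.Ioc_eq_empty (by linarith)]
    simp [IntegrableOn]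

lemma H1Pair.energy_piece (P : H1Pair 1)
    (hb : ∀ t ∈ Icc (0:ℝ) 1, P.b t ∈ Icc (0:ℝ) 1) {u v : ℝ}
    (hu : u ∈ Icc (0:ℝ) 1) (hv : v ∈ Icc (0:ℝ) 1) (huv : u ≤ v) :
    (∫ t in Ioc u v, (1 - P.b t) * P.db t)
      = (1 - P.b u) ^ 2 / 2 - (1 - P.b v) ^ 2 / 2 := by
  have hD : IntegrableOn P.db (Ioc u v) := integrableOn_sub P.db_int hu.1 hv.2
  have key := half_square hD
  set Δ := ∫ t in Ioc u v, P.db t with hΔ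
  have hmem : ∀ t ∈ Ioc u v, t ∈ Icc (0:ℝ) 1 :=
    fun t ht => ⟨hu.1.trans ht.1.le, ht.2.trans hv.2⟩
  -- integrability of each piece
  have hint1 : IntegrableOn (fun t => (1 - P.b u) * P.db t) (Ioc u v) := hD.const_mul _
  have hint2 : IntegrableOn (fun t => (∫ r in Ioc u t, P.db r) * P.db t) (Ioc u v) := by
    apply Integrable.congr ((hD.const_mul (1 - P.b u)).sub
      (P.one_sub_b_mul_db_int hb hu.1 hv.2))
    filter_upwards [ae_restrict_mem measurableSet_Ioc] with t ht
    have hbt := P.b_sub hu (hmem t ht) ht.1.le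
    show (1 - P.b u) * P.db t - (1 - P.b t) * P.db t = _
    rw [hbt]; ring
  have hcong : (∫ t in Ioc u v, (1 - P.b t) * P.db t)
      = ∫ t in Ioc u v, ((1 - P.b u) * P.db t - (∫ r in Ioc u t, P.db r) * P.db t) := by
    apply setIntegral_congr_fun measurableSet_Ioc
    intro t ht
    have hbt := P.b_sub hu (hmem t ht) ht.1.le
    show (1 - P.b t) * P.db t = _
    rw [hbt]; ring
  rw [hcong, integral_sub hint1 hint2, integral_const_mul, key]
  have hbv : P.b v = P.b u + Δ := P.b_sub hu hv huv
  rw [hbv]; ring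

lemma H1Pair.dip_bound (f : ℝ → ℝ) (l : ℝ) (P : H1Pair 1)
    (hb : ∀ t ∈ Icc (0:ℝ) 1, P.b t ∈ Icc (0:ℝ) 1)
    (hb0 : P.b 0 = 1) (hb1 : P.b 1 = 1) {t₀ : ℝ} (ht₀ : t₀ ∈ Icc (0:ℝ) 1) :
    ENNReal.ofReal ((1 - P.b t₀) ^ 2) ≤ surfEnergy f l P := by
  have step1 : (∫⁻ t in Ioo (0:ℝ) 1, ENNReal.ofReal (|1 - P.b t| * |P.db t|))
      ≤ surfEnergy f l P := by
    apply lintegral_mono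
    intro t
    apply ENNReal.ofReal_le_ofReal
    have h1 : |1 - P.b t| * |P.db t| = Real.sqrt ((1 - P.b t)^2 * (P.db t)^2) := by
      rw [← mul_pow, Real.sqrt_sq_eq_abs, abs_mul]
    rw [h1]
    apply Real.sqrt_le_sqrt
    have : 0 ≤ (damageExt f l (P.b t))^2 * (P.da t)^2 := mul_nonneg (sq_nonneg _) (sq_nonneg _)
    linarith
  refine le_trans ?_ step1
  have hsplit : (∫⁻ t in Ioo (0:ℝ) 1, ENNReal.ofReal (|1 - P.b t| * |P.db t|))
      = (∫⁻ t in Ioc (0:ℝ) t₀, ENNReal.ofReal (|1 - P.b t| * |P.db t|))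
        + ∫⁻ t in Ioc t₀ 1, ENNReal.ofReal (|1 - P.b t| * |P.db t|) := by
    rw [Measure.restrict_congr_set Ioo_ae_eq_Ioc,
      ← Ioc_union_Ioc_eq_Ioc ht₀.1 ht₀.2,
      lintegral_union measurableSet_Ioc (Set.Ioc_disjoint_Ioc_of_le le_rfl)]
  rw [hsplit]
  have habs : ∀ (u v : ℝ), 0 ≤ u → v ≤ 1 → u ≤ v →
      ENNReal.ofReal (|(1 - P.b u)^2/2 - (1 - P.b v)^2/2|)
        ≤ ∫⁻ t in Ioc u v, ENNReal.ofReal (|1 - P.b t| * |P.db t|) := by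
    intro u v hu hv huv
    have hint := P.one_sub_b_mul_db_int hb hu hv
    have hint2 : Integrable (fun t => |1 - P.b t| * |P.db t|) (volume.restrict (Ioc u v)) :=
      hint.abs.congr (Filter.Eventually.of_forall fun t => abs_mul _ _)
    have heq : (∫⁻ t in Ioc u v, ENNReal.ofReal (|1 - P.b t| * |P.db t|))
        = ENNReal.ofReal (∫ t in Ioc u v, |1 - P.b t| * |P.db t|) :=
      (ofReal_integral_eq_lintegral_ofReal hint2
        (Filter.Eventually.of_forall (fun t => mul_nonneg (abs_nonneg _) (abs_nonneg _)))).symm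
    rw [heq]
    apply ENNReal.ofReal_le_ofReal
    rw [← P.energy_piece hb ⟨hu, huv.trans hv⟩ ⟨hu.trans huv, hv⟩ huv]
    simpa using MeasureTheory.norm_integral_le_integral_norm
      (μ := volume.restrict (Ioc u v)) (fun t => (1 - P.b t) * P.db t)
  have h1 := habs 0 t₀ le_rfl ht₀.2 ht₀.1
  have h2 := habs t₀ 1 ht₀.1 le_rfl ht₀.2
  rw [hb0] at h1
  rw [hb1] at h2
  have e1 : |(1 - (1:ℝ))^2/2 - (1 - P.b t₀)^2/2| = (1 - P.b t₀)^2/2 := by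
    rw [abs_of_nonpos (by nlinarith [sq_nonneg (1 - P.b t₀)])]; ring
  have e2 : |(1 - P.b t₀)^2/2 - (1 - (1:ℝ))^2/2| = (1 - P.b t₀)^2/2 := by
    rw [abs_of_nonneg (by nlinarith [sq_nonneg (1 - P.b t₀)])]; ring
  rw [e1] at h1
  rw [e2] at h2
  refine le_trans (le_of_eq ?_) (add_le_add h1 h2)
  have hx : (0:ℝ) ≤ (1 - P.b t₀)^2/2 := by positivity
  rw [← ENNReal.ofReal_add hx hx]
  congr 1
  ring

lemma H1Pair.slope_bound (f : ℝ → ℝ) (l : ℝ) (P : H1Pair 1) {s c : ℝ}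
    (hs : 0 ≤ s) (hc : 0 ≤ c) (ha0 : P.a 0 = 0) (ha1 : P.a 1 = s)
    (hfc : ∀ t ∈ Ioo (0:ℝ) 1, c ≤ damageExt f l (P.b t)) :
    ENNReal.ofReal (c * s) ≤ surfEnergy f l P := by
  have step1 : (∫⁻ t in Ioo (0:ℝ) 1, ENNReal.ofReal (c * |P.da t|))
      ≤ surfEnergy f l P := by
    apply lintegral_mono_ae
    filter_upwards [ae_restrict_mem measurableSet_Ioo] with t ht
    apply ENNReal.ofReal_le_ofReal
    have h2 : c * |P.da t| ≤ damageExt f l (P.b t) * |P.da t| :=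
      mul_le_mul_of_nonneg_right (hfc t ht) (abs_nonneg _)
    refine h2.trans ?_
    have h3 : damageExt f l (P.b t) * |P.da t|
        = Real.sqrt ((damageExt f l (P.b t))^2 * (P.da t)^2) := by
      rw [← mul_pow, Real.sqrt_sq_eq_abs, abs_mul,
        abs_of_nonneg (hc.trans (hfc t ht))]
    rw [h3]
    apply Real.sqrt_le_sqrt
    have : 0 ≤ (1 - P.b t)^2 * (P.db t)^2 := mul_nonneg (sq_nonneg _) (sq_nonneg _)
    linarith
  refine le_trans ?_ step1
  have hint : IntegrableOn P.da (Ioo (0:ℝ) 1) := P.da_int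
  have heq : (∫⁻ t in Ioo (0:ℝ) 1, ENNReal.ofReal (c * |P.da t|))
      = ENNReal.ofReal (∫ t in Ioo (0:ℝ) 1, c * |P.da t|) :=
    (ofReal_integral_eq_lintegral_ofReal (hint.abs.const_mul c)
      (Filter.Eventually.of_forall (fun t => mul_nonneg hc (abs_nonneg _)))).symm
  rw [heq]
  apply ENNReal.ofReal_le_ofReal
  rw [integral_const_mul]
  have hs' : (∫ t in Ioo (0:ℝ) 1, P.da t) = s := by
    have h1 : (∫ t in Ioo (0:ℝ) 1, P.da t) = ∫ t in Ioc (0:ℝ) 1, P.da t := by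
      rw [Measure.restrict_congr_set Ioo_ae_eq_Ioc]
    have h2 := P.a_ftc 1 ⟨zero_le_one, le_rfl⟩
    rw [ha0, ha1] at h2
    rw [h1]
    linarith
  gcongr
  calc s = |∫ t in Ioo (0:ℝ) 1, P.da t| := by rw [hs', abs_of_nonneg hs]
    _ ≤ ∫ t in Ioo (0:ℝ) 1, |P.da t| := by
        simpa using MeasureTheory.norm_integral_le_integral_norm
          (μ := volume.restrict (Ioo (0:ℝ) 1)) P.da

noncomputable def pairOne (s : ℝ) : H1Pair 1 where
  a := fun t => s * t
  b := fun _ => 1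
  da := fun _ => s
  db := fun _ => 0
  da_mem := memLp_const s
  db_mem := memLp_const 0
  a_ftc := by
    intro x hx
    rw [int_const_Ioc s 0 x hx.1]
    ring
  b_ftc := by
    intro x hx
    simp

lemma pairOne_admissible (s : ℝ) : (pairOne s).Admissible s := by
  refine ⟨fun t _ => ⟨zero_le_one, le_rfl⟩, by simp [pairOne], by simp [pairOne], rfl, rfl⟩

lemma energy_pairOne (f : ℝ → ℝ) (l s : ℝ) (hl : 0 ≤ l) (hs : 0 ≤ s) :
    surfEnergy f l (pairOne s) = ENNReal.ofReal (l * s) := by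
  unfold surfEnergy
  have hpt : ∀ t : ℝ, Real.sqrt ((damageExt f l ((pairOne s).b t))^2 * ((pairOne s).da t)^2
      + (1 - (pairOne s).b t)^2 * ((pairOne s).db t)^2) = l * s := by
    intro t
    show Real.sqrt ((damageExt f l 1)^2 * s^2 + (1 - 1)^2 * (0:ℝ)^2) = l * s
    rw [damageExt, if_pos rfl]
    have : l^2 * s^2 + (1 - 1:ℝ)^2 * (0:ℝ)^2 = (l * s)^2 := by ring
    rw [this, Real.sqrt_sq (mul_nonneg hl hs)]
  simp only [hpt]
  rw [setLIntegral_const]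
  simp [Real.volume_Ioo]

lemma pw_meas (c₁ c₂ c₃ : ℝ) :
    Measurable (fun t : ℝ => if t ≤ 1/3 then c₁ else if t ≤ 2/3 then c₂ else c₃) :=
  Measurable.ite measurableSet_Iic measurable_const
    (Measurable.ite measurableSet_Iic measurable_const measurable_const)

lemma pw_bdd (c₁ c₂ c₃ : ℝ) (t : ℝ) :
    |if t ≤ 1/3 then c₁ else if t ≤ 2/3 then c₂ else c₃| ≤ |c₁| + |c₂| + |c₃| := by
  split_ifs <;> [skip; skip; skip] <;>
    nlinarith [abs_nonneg c₁, abs_nonneg c₂, abs_nonneg c₃]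

lemma pw_intOn (c₁ c₂ c₃ u v : ℝ) :
    IntegrableOn (fun t : ℝ => if t ≤ 1/3 then c₁ else if t ≤ 2/3 then c₂ else c₃)
      (Ioc u v) :=
  integrableOn_of_bounded (pw_meas c₁ c₂ c₃) _ (pw_bdd c₁ c₂ c₃)

lemma primitive_piecewise (c₁ c₂ c₃ : ℝ) {x : ℝ} (hx : 0 ≤ x) :
    (∫ t in Ioc (0:ℝ) x, (if t ≤ 1/3 then c₁ else if t ≤ 2/3 then c₂ else c₃))
      = if x ≤ 1/3 then c₁ * x
        else if x ≤ 2/3 then c₁/3 + c₂ * (x - 1/3)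
        else c₁/3 + c₂/3 + c₃ * (x - 2/3) := by
  by_cases h1 : x ≤ 1/3
  · rw [if_pos h1]
    rw [setIntegral_congr_fun measurableSet_Ioc
      (fun t ht => if_pos (ht.2.trans h1) : EqOn _ (fun _ => c₁) _)]
    rw [int_const_Ioc c₁ 0 x hx]; ring
  · push_neg at h1
    rw [if_neg (not_le.2 h1)]
    rw [← Ioc_union_Ioc_eq_Ioc (by norm_num : (0:ℝ) ≤ 1/3) h1.le,
      setIntegral_union (Set.Ioc_disjoint_Ioc_of_le le_rfl) measurableSet_Ioc
        (pw_intOn c₁ c₂ c₃ 0 (1/3)) (pw_intOn c₁ c₂ c₃ (1/3) x)]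
    have e1 : (∫ t in Ioc (0:ℝ) (1/3), (if t ≤ 1/3 then c₁ else if t ≤ 2/3 then c₂ else c₃))
        = c₁ / 3 := by
      rw [setIntegral_congr_fun measurableSet_Ioc
        (fun t ht => if_pos ht.2 : EqOn _ (fun _ => c₁) _)]
      rw [int_const_Ioc c₁ 0 (1/3) (by norm_num)]; ring
    rw [e1]
    by_cases h2 : x ≤ 2/3
    · rw [if_pos h2]
      have e2 : (∫ t in Ioc (1/3:ℝ) x, (if t ≤ 1/3 then c₁ else if t ≤ 2/3 then c₂ else c₃))
          = c₂ * (x - 1/3) := by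
        rw [setIntegral_congr_fun measurableSet_Ioc
          (fun t ht => by
            rw [if_neg (not_le.2 ht.1), if_pos (ht.2.trans h2)] :
            EqOn _ (fun _ => c₂) _)]
        exact int_const_Ioc c₂ (1/3) x h1.le
      rw [e2]
    · push_neg at h2
      rw [if_neg (not_le.2 h2)]
      rw [← Ioc_union_Ioc_eq_Ioc (by norm_num : (1/3:ℝ) ≤ 2/3) h2.le,
        setIntegral_union (Set.Ioc_disjoint_Ioc_of_le le_rfl) measurableSet_Ioc
          (pw_intOn c₁ c₂ c₃ (1/3) (2/3)) (pw_intOn c₁ c₂ c₃ (2/3) x)]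
      have e2 : (∫ t in Ioc (1/3:ℝ) (2/3), (if t ≤ 1/3 then c₁ else if t ≤ 2/3 then c₂ else c₃))
          = c₂ / 3 := by
        rw [setIntegral_congr_fun measurableSet_Ioc
          (fun t ht => by rw [if_neg (not_le.2 ht.1), if_pos ht.2] : EqOn _ (fun _ => c₂) _)]
        rw [int_const_Ioc c₂ (1/3) (2/3) (by norm_num)]; ring
      have e3 : (∫ t in Ioc (2/3:ℝ) x, (if t ≤ 1/3 then c₁ else if t ≤ 2/3 then c₂ else c₃))
          = c₃ * (x - 2/3) := by
        rw [setIntegral_congr_fun measurableSet_Ioc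
          (fun t ht => by
            rw [if_neg (by linarith [ht.1] : ¬ t ≤ 1/3), if_neg (not_le.2 ht.1)] :
            EqOn _ (fun _ => c₃) _)]
        exact int_const_Ioc c₃ (2/3) x h2.le
      rw [e2, e3]; ring

noncomputable def pairDip (s ε : ℝ) : H1Pair 1 where
  a := fun t => if t ≤ 1/3 then 0 else if t ≤ 2/3 then 3*s*(t - 1/3) else s
  b := fun t => if t ≤ 1/3 then 1 - 3*(1-ε)*t else if t ≤ 2/3 then ε else 1 - 3*(1-ε)*(1-t)
  da := fun t => if t ≤ 1/3 then 0 else if t ≤ 2/3 then 3*s else 0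
  db := fun t => if t ≤ 1/3 then -(3*(1-ε)) else if t ≤ 2/3 then 0 else 3*(1-ε)
  da_mem := memℒp2_of_bounded (pw_meas _ _ _) _ (pw_bdd _ _ _)
  db_mem := memℒp2_of_bounded (pw_meas _ _ _) _ (pw_bdd _ _ _)
  a_ftc := by
    intro x hx
    rw [primitive_piecewise _ _ _ hx.1]
    show (if x ≤ 1/3 then (0:ℝ) else if x ≤ 2/3 then 3*s*(x - 1/3) else s)
      = (if (0:ℝ) ≤ 1/3 then (0:ℝ) else if (0:ℝ) ≤ 2/3 then 3*s*((0:ℝ) - 1/3) else s) + _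
    rw [if_pos (by norm_num : (0:ℝ) ≤ 1/3)]
    split_ifs <;> ring
  b_ftc := by
    intro x hx
    rw [primitive_piecewise _ _ _ hx.1]
    show (if x ≤ 1/3 then 1 - 3*(1-ε)*x else if x ≤ 2/3 then ε else 1 - 3*(1-ε)*(1-x))
      = (if (0:ℝ) ≤ 1/3 then 1 - 3*(1-ε)*0 else if (0:ℝ) ≤ 2/3 then ε else 1 - 3*(1-ε)*(1-0)) + _
    rw [if_pos (by norm_num : (0:ℝ) ≤ 1/3)]
    split_ifs <;> ring

lemma pairDip_admissible (s ε : ℝ) (hε0 : 0 ≤ ε) (hε1 : ε ≤ 1) :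
    (pairDip s ε).Admissible s := by
  refine ⟨?_, ?_, ?_, ?_, ?_⟩
  · intro t ht
    show (if t ≤ 1/3 then 1 - 3*(1-ε)*t else if t ≤ 2/3 then ε else 1 - 3*(1-ε)*(1-t)) ∈ _
    split_ifs with h1 h2
    · constructor <;> nlinarith [ht.1, ht.2]
    · exact ⟨hε0, hε1⟩
    · push_neg at h1 h2
      constructor <;> nlinarith [ht.1, ht.2]
  · show (if (0:ℝ) ≤ 1/3 then (0:ℝ) else _) = 0
    norm_num
  · show (if (1:ℝ) ≤ 1/3 then (0:ℝ) else if (1:ℝ) ≤ 2/3 then 3*s*(1 - 1/3) else s) = s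
    norm_num
  · show (if (0:ℝ) ≤ 1/3 then 1 - 3*(1-ε)*0 else _) = 1
    norm_num
  · show (if (1:ℝ) ≤ 1/3 then 1 - 3*(1-ε)*1 else if (1:ℝ) ≤ 2/3 then ε else 1 - 3*(1-ε)*(1-1)) = 1
    norm_num

lemma energy_pairDip (f : ℝ → ℝ) (l s ε : ℝ) (hs : 0 ≤ s) (hε0 : 0 < ε) (hε1 : ε < 1)
    (hf : 0 ≤ f ε) :
    surfEnergy f l (pairDip s ε) = ENNReal.ofReal ((1-ε)^2 + (1-ε) * f ε * s) := by
  set H : ℝ → ℝ := fun t => if t ≤ 1/3 then 9*(1-ε)^2*t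
    else if t ≤ 2/3 then 3*((1-ε) * f ε * s) else 9*(1-ε)^2*(1-t) with hH
  have hHm : Measurable H := by
    apply Measurable.ite measurableSet_Iic (measurable_id.const_mul _)
    exact Measurable.ite measurableSet_Iic measurable_const
      ((measurable_const.sub measurable_id).const_mul _)
  have hpt : ∀ t ∈ Ioo (0:ℝ) 1,
      ENNReal.ofReal (Real.sqrt ((damageExt f l ((pairDip s ε).b t))^2 * ((pairDip s ε).da t)^2
        + (1 - (pairDip s ε).b t)^2 * ((pairDip s ε).db t)^2)) = ENNReal.ofReal (H t) := by
    intro t ht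
    congr 1
    show Real.sqrt ((damageExt f l (if t ≤ 1/3 then 1 - 3*(1-ε)*t else if t ≤ 2/3 then ε
        else 1 - 3*(1-ε)*(1-t)))^2 * (if t ≤ 1/3 then (0:ℝ) else if t ≤ 2/3 then 3*s else 0)^2
      + (1 - (if t ≤ 1/3 then 1 - 3*(1-ε)*t else if t ≤ 2/3 then ε else 1 - 3*(1-ε)*(1-t)))^2
        * (if t ≤ 1/3 then -(3*(1-ε)) else if t ≤ 2/3 then (0:ℝ) else 3*(1-ε))^2) = H t
    simp only [hH]
    split_ifs with h1 h2
    · have he : (damageExt f l (1 - 3*(1-ε)*t))^2 * (0:ℝ)^2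
          + (1 - (1 - 3*(1-ε)*t))^2 * (-(3*(1-ε)))^2 = (9*(1-ε)^2*t)^2 := by ring
      rw [he, Real.sqrt_sq (by nlinarith [ht.1])]
    · have hne : ε ≠ 1 := ne_of_lt hε1
      rw [damageExt, if_neg hne]
      have he : ((1-ε) * f ε)^2 * (3*s)^2 + (1 - ε)^2 * (0:ℝ)^2
          = (3*((1-ε) * f ε * s))^2 := by ring
      rw [he, Real.sqrt_sq
        (by nlinarith [mul_nonneg (mul_nonneg (by linarith : (0:ℝ) ≤ 1-ε) hf) hs])]
    · have he : (damageExt f l (1 - 3*(1-ε)*(1-t)))^2 * (0:ℝ)^2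
          + (1 - (1 - 3*(1-ε)*(1-t)))^2 * (3*(1-ε))^2 = (9*(1-ε)^2*(1-t))^2 := by ring
      rw [he, Real.sqrt_sq (by nlinarith [ht.2])]
  have hstep : surfEnergy f l (pairDip s ε) = ∫⁻ t in Ioo (0:ℝ) 1, ENNReal.ofReal (H t) :=
    setLIntegral_congr_fun measurableSet_Ioo hpt
  have hHint : IntegrableOn H (Ioo (0:ℝ) 1) := by
    apply memLp_one_iff_integrable.1
    apply MemLp.of_bound hHm.aestronglyMeasurable (9 + 3*((1-ε) * f ε * s))
    filter_upwards [ae_restrict_mem measurableSet_Ioo] with t ht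
    rw [Real.norm_eq_abs]
    simp only [hH]
    have hfs : 0 ≤ (1-ε) * f ε * s :=
      mul_nonneg (mul_nonneg (by linarith : (0:ℝ) ≤ 1-ε) hf) hs
    split_ifs with h1 h2
    · rw [abs_of_nonneg (by nlinarith [ht.1])]
      nlinarith [ht.1, ht.2, sq_nonneg (1-ε)]
    · rw [abs_of_nonneg (by nlinarith)]
      nlinarith
    · rw [abs_of_nonneg (by nlinarith [ht.2])]
      nlinarith [ht.1, ht.2, sq_nonneg (1-ε)]
  have hHnn : ∀ t ∈ Ioo (0:ℝ) 1, 0 ≤ H t := by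
    intro t ht
    simp only [hH]
    split_ifs <;> nlinarith [ht.1, ht.2, mul_nonneg (mul_nonneg (by nlinarith : (0:ℝ) ≤ 1-ε) hf) hs]
  have hofReal : (∫⁻ t in Ioo (0:ℝ) 1, ENNReal.ofReal (H t))
      = ENNReal.ofReal (∫ t in Ioo (0:ℝ) 1, H t) := by
    rw [ofReal_integral_eq_lintegral_ofReal hHint]
    filter_upwards [ae_restrict_mem measurableSet_Ioo] with t ht using hHnn t ht
  rw [hstep, hofReal]
  congr 1
  have hsplit : (∫ t in Ioo (0:ℝ) 1, H t)
      = (∫ t in Ioc (0:ℝ) (1/3), H t) + (∫ t in Ioc (1/3:ℝ) (2/3), H t)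
        + ∫ t in Ioc (2/3:ℝ) 1, H t := by
    rw [Measure.restrict_congr_set Ioo_ae_eq_Ioc]
    rw [← Ioc_union_Ioc_eq_Ioc (by norm_num : (0:ℝ) ≤ 2/3) (by norm_num : (2/3:ℝ) ≤ 1),
      setIntegral_union (Set.Ioc_disjoint_Ioc_of_le le_rfl) measurableSet_Ioc
        (integrableOn_sub hHint le_rfl (by norm_num)) (integrableOn_sub hHint (by norm_num) le_rfl),
      ← Ioc_union_Ioc_eq_Ioc (by norm_num : (0:ℝ) ≤ 1/3) (by norm_num : (1/3:ℝ) ≤ 2/3),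
      setIntegral_union (Set.Ioc_disjoint_Ioc_of_le le_rfl) measurableSet_Ioc
        (integrableOn_sub hHint le_rfl (by norm_num)) (integrableOn_sub hHint (by norm_num) (by norm_num))]
  have e1 : (∫ t in Ioc (0:ℝ) (1/3), H t) = (1-ε)^2/2 := by
    rw [setIntegral_congr_fun measurableSet_Ioc
      (fun t ht => if_pos ht.2 : EqOn H (fun t => 9*(1-ε)^2*t) _)]
    rw [integral_const_mul, ← ii_of_le (by norm_num : (0:ℝ) ≤ 1/3), ii_id]
    ring
  have e2 : (∫ t in Ioc (1/3:ℝ) (2/3), H t) = (1-ε) * f ε * s := by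
    rw [setIntegral_congr_fun measurableSet_Ioc
      (fun t ht => by simp only [hH]; rw [if_neg (not_le.2 ht.1), if_pos ht.2] :
        EqOn H (fun _ => 3*((1-ε) * f ε * s)) _)]
    rw [int_const_Ioc _ _ _ (by norm_num)]
    ring
  have e3 : (∫ t in Ioc (2/3:ℝ) 1, H t) = (1-ε)^2/2 := by
    rw [setIntegral_congr_fun measurableSet_Ioc
      (fun t ht => by
        simp only [hH]
        rw [if_neg (by linarith [ht.1] : ¬ t ≤ 1/3), if_neg (not_le.2 ht.1)] :
        EqOn H (fun t => 9*(1-ε)^2*(1-t)) _)]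
    rw [integral_const_mul, ← ii_of_le (by norm_num : (2/3:ℝ) ≤ 1)]
    have hv : (∫ x in (2/3:ℝ)..1, (1 - x)) = 1/18 := by
      rw [ii_one_sub]; norm_num
    rw [hv]
    ring
  rw [hsplit, e1, e2, e3]
  ring

lemma inf_le_ofReal (f : ℝ → ℝ) (l s : ℝ) (hl : 0 ≤ l) (hs : 0 ≤ s) :
    (⨅ (P : H1Pair 1) (_ : P.Admissible s), surfEnergy f l P) ≤ ENNReal.ofReal (l * s) :=
  le_trans (iInf₂_le (pairOne s) (pairOne_admissible s)) (energy_pairOne f l s hl hs).le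

lemma inf_ne_top (f : ℝ → ℝ) (l s : ℝ) (hl : 0 ≤ l) (hs : 0 ≤ s) :
    (⨅ (P : H1Pair 1) (_ : P.Admissible s), surfEnergy f l P) ≠ ⊤ :=
  ((inf_le_ofReal f l s hl hs).trans_lt ENNReal.ofReal_lt_top).ne

lemma surfDensity_le_ls (f : ℝ → ℝ) (l s : ℝ) (hl : 0 ≤ l) (hs : 0 ≤ s) :
    surfDensity f l s ≤ l * s :=
  ENNReal.toReal_le_of_le_ofReal (mul_nonneg hl hs) (inf_le_ofReal f l s hl hs)

lemma surfDensity_le_dip (f : ℝ → ℝ) (l s ε : ℝ) (hadm : AdmissibleDamage f l)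
    (hs : 0 ≤ s) (hε0 : 0 < ε) (hε1 : ε < 1) :
    surfDensity f l s ≤ (1-ε)^2 + (1-ε) * f ε * s := by
  have hf : 0 ≤ f ε := hadm.2.2.1 ε ⟨hε0.le, hε1⟩
  apply ENNReal.toReal_le_of_le_ofReal
    (by nlinarith [mul_nonneg (mul_nonneg (by linarith : (0:ℝ) ≤ 1-ε) hf) hs, sq_nonneg (1-ε)])
  exact le_trans (iInf₂_le (pairDip s ε) (pairDip_admissible s ε hε0.le hε1.le))
    (energy_pairDip f l s ε hs hε0 hε1 hf).le

lemma surfDensity_le_one (f : ℝ → ℝ) (l s : ℝ) (hadm : AdmissibleDamage f l) (hs : 0 ≤ s) :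
    surfDensity f l s ≤ 1 := by
  have hne : (nhdsWithin (0:ℝ) (Ioo (0:ℝ) 1)).NeBot := by
    apply mem_closure_iff_nhdsWithin_neBot.1
    rw [closure_Ioo (by norm_num : (0:ℝ) ≠ 1)]
    exact ⟨le_rfl, zero_le_one⟩
  have hf0 : f 0 = 0 := (hadm.2.2.2.1 0 ⟨le_rfl, zero_lt_one⟩).2 rfl
  have hft : Filter.Tendsto f (nhdsWithin 0 (Ioo (0:ℝ) 1)) (nhds 0) := by
    have h := (hadm.1 0 ⟨le_rfl, zero_lt_one⟩)
    rw [ContinuousWithinAt, hf0] at h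
    exact h.mono_left (nhdsWithin_mono 0 Ioo_subset_Ico_self)
  have h1 : Filter.Tendsto (fun ε : ℝ => ε) (nhdsWithin 0 (Ioo (0:ℝ) 1)) (nhds 0) :=
    Filter.tendsto_id.mono_left nhdsWithin_le_nhds
  have hcont : Filter.Tendsto (fun ε => (1-ε)^2 + (1-ε) * f ε * s)
      (nhdsWithin 0 (Ioo (0:ℝ) 1)) (nhds 1) := by
    have hc1 : Filter.Tendsto (fun _ : ℝ => (1:ℝ)) (nhdsWithin (0:ℝ) (Ioo (0:ℝ) 1)) (nhds 1) :=
      tendsto_const_nhds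
    have hcs : Filter.Tendsto (fun _ : ℝ => s) (nhdsWithin (0:ℝ) (Ioo (0:ℝ) 1)) (nhds s) :=
      tendsto_const_nhds
    have := ((hc1.sub h1).pow 2).add (((hc1.sub h1).mul hft).mul hcs)
    simpa using this
  apply ge_of_tendsto hcont
  filter_upwards [self_mem_nhdsWithin] with ε hε
  exact surfDensity_le_dip f l s ε hadm hs hε.1 hε.2

lemma surfEnergy_mono_s11 (f g : ℝ → ℝ) (l : ℝ) (hl : 0 ≤ l)
    (hfg : ∀ x ∈ Ico (0:ℝ) 1, f x ≤ g x) (hf : ∀ x ∈ Ico (0:ℝ) 1, 0 ≤ f x)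
    (P : H1Pair 1) (hb : ∀ t ∈ Icc (0:ℝ) 1, P.b t ∈ Icc (0:ℝ) 1) :
    surfEnergy f l P ≤ surfEnergy g l P := by
  apply lintegral_mono_ae
  filter_upwards [ae_restrict_mem measurableSet_Ioo] with t ht
  apply ENNReal.ofReal_le_ofReal
  apply Real.sqrt_le_sqrt
  have hbt := hb t ⟨ht.1.le, ht.2.le⟩
  have hd : 0 ≤ damageExt f l (P.b t) ∧ damageExt f l (P.b t) ≤ damageExt g l (P.b t) := by
    rw [damageExt, damageExt]
    by_cases h : P.b t = 1
    · rw [if_pos h, if_pos h]; exact ⟨hl, le_rfl⟩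
    · rw [if_neg h, if_neg h]
      have hlt : P.b t < 1 := lt_of_le_of_ne hbt.2 h
      have hmem : P.b t ∈ Ico (0:ℝ) 1 := ⟨hbt.1, hlt⟩
      exact ⟨mul_nonneg (by linarith) (hf _ hmem),
        mul_le_mul_of_nonneg_left (hfg _ hmem) (by linarith)⟩
  have hsq : (damageExt f l (P.b t))^2 ≤ (damageExt g l (P.b t))^2 := by
    nlinarith [hd.1, hd.2]
  linarith [mul_le_mul_of_nonneg_right hsq (sq_nonneg (P.da t))]

lemma surfDensity_mono (f g : ℝ → ℝ) (l s : ℝ) (hl : 0 ≤ l)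
    (hfg : ∀ x ∈ Ico (0:ℝ) 1, f x ≤ g x) (hf : ∀ x ∈ Ico (0:ℝ) 1, 0 ≤ f x)
    (hs : 0 ≤ s) : surfDensity f l s ≤ surfDensity g l s := by
  apply ENNReal.toReal_mono (inf_ne_top g l s hl hs)
  apply le_iInf₂
  intro P hP
  exact le_trans (iInf₂_le P hP) (surfEnergy_mono_s11 f g l hl hfg hf P hP.1)

lemma eventually_damage_lb (F : ℕ → ℝ → ℝ) (l δ ε' : ℝ)
    (hadm : ∀ j, AdmissibleDamage (F j) l)
    (hmono : ∀ j, ∀ x ∈ Set.Ico (0:ℝ) 1, F j x ≤ F (j+1) x)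
    (hlim : ∀ x ∈ Set.Ioo (0:ℝ) 1,
      Filter.Tendsto (fun j => F j x) Filter.atTop Filter.atTop)
    (hδ0 : 0 < δ) (hδ1 : δ < 1) (hε' : 0 < ε') (hl : 0 < l) :
    ∃ J : ℕ, ∀ j ≥ J, ∀ u, δ ≤ u → u ≤ 1 → l - ε' ≤ damageExt (F j) l u := by
  have hFmono : ∀ j, ∀ x ∈ Ico (0:ℝ) 1, F 0 x ≤ F j x := by
    intro j
    induction j with
    | zero => exact fun x _ => le_rfl
    | succ n ih => exact fun x hx => (ih x hx).trans (hmono n x hx)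
  have htail : ∀ᶠ x in nhdsWithin 1 (Iio (1:ℝ)), l - ε' < (1 - x) * F 0 x :=
    (hadm 0).2.2.2.2.2.eventually (eventually_gt_nhds (by linarith))
  rw [eventually_nhdsWithin_iff, Metric.eventually_nhds_iff] at htail
  obtain ⟨η, hη0, hηP⟩ := htail
  set w := max δ (1 - η/2) with hw
  have hw1 : w < 1 := max_lt hδ1 (by linarith)
  have hw0 : 0 < w := lt_of_lt_of_le hδ0 (le_max_left _ _)
  have hwδ : δ ≤ w := le_max_left _ _
  have hwη : 1 - w ≤ η/2 := by
    have := le_max_right δ (1 - η/2)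
    linarith
  obtain ⟨J, hJ⟩ := Filter.eventually_atTop.1
    ((hlim δ ⟨hδ0, hδ1⟩).eventually_ge_atTop (l / (1 - w)))
  refine ⟨J, fun j hj u hδu hu1 => ?_⟩
  rcases eq_or_lt_of_le hu1 with heq | hu
  · rw [damageExt, if_pos heq]
    linarith
  · rw [damageExt, if_neg (ne_of_lt hu)]
    have humem : u ∈ Ico (0:ℝ) 1 := ⟨by linarith, hu⟩
    by_cases hcase : w < u
    · have hd : dist u 1 < η := by
        rw [Real.dist_eq, abs_of_nonpos (by linarith)]
        linarith
      have h1 : l - ε' < (1 - u) * F 0 u := hηP hd (mem_Iio.2 hu)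
      have h2 : (1 - u) * F 0 u ≤ (1 - u) * F j u :=
        mul_le_mul_of_nonneg_left (hFmono j u humem) (by linarith)
      linarith
    · push_neg at hcase
      have hmono_j := (hadm j).2.1
      have hFu : F j δ ≤ F j u := hmono_j ⟨hδ0.le, hδ1⟩ humem hδu
      have hFδ : l / (1 - w) ≤ F j δ := hJ j hj
      have hpos : 0 < 1 - w := by linarith
      have hFδ0 : 0 ≤ F j δ := le_trans (by positivity) hFδ
      have key : l ≤ (1 - u) * F j u := by
        have step1 : (1 - w) * (l / (1 - w)) ≤ (1 - u) * F j u := by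
          apply mul_le_mul (by linarith) (hFδ.trans hFu) (by positivity) (by linarith)
        rwa [mul_div_cancel₀ l (ne_of_gt hpos)] at step1
      linarith

lemma eventually_lower (F : ℕ → ℝ → ℝ) (l : ℝ)
    (hadm : ∀ j, AdmissibleDamage (F j) l)
    (hmono : ∀ j, ∀ x ∈ Set.Ico (0:ℝ) 1, F j x ≤ F (j+1) x)
    (hlim : ∀ x ∈ Set.Ioo (0:ℝ) 1,
      Filter.Tendsto (fun j => F j x) Filter.atTop Filter.atTop)
    (s ε : ℝ) (hs : 0 < s) (hε : 0 < ε) :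
    ∃ J : ℕ, ∀ j ≥ J, min 1 (l*s) - ε ≤ surfDensity (F j) l s := by
  have hl : 0 < l := (hadm 0).2.2.2.2.1
  set δ := min (ε/2) (1/2) with hδ
  have hδ0 : 0 < δ := lt_min (by linarith) (by norm_num)
  have hδ1 : δ < 1 := lt_of_le_of_lt (min_le_right _ _) (by norm_num)
  set ε' := min (ε/s) (l/2) with hε'
  have hε'0 : 0 < ε' := lt_min (by positivity) (by linarith)
  have hε'l : ε' ≤ l/2 := min_le_right _ _
  obtain ⟨J, hJ⟩ := eventually_damage_lb F l δ ε' hadm hmono hlim hδ0 hδ1 hε'0 hl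
  refine ⟨J, fun j hj => ?_⟩
  have hbound : ∀ P : H1Pair 1, P.Admissible s →
      ENNReal.ofReal (min 1 (l*s) - ε) ≤ surfEnergy (F j) l P := by
    intro P hP
    by_cases hdipc : ∃ t₀ ∈ Icc (0:ℝ) 1, P.b t₀ < δ
    · obtain ⟨t₀, ht₀, hbt₀⟩ := hdipc
      refine le_trans ?_ (P.dip_bound (F j) l hP.1 hP.2.2.2.1 hP.2.2.2.2 ht₀)
      apply ENNReal.ofReal_le_ofReal
      have hb0 := (hP.1 t₀ ht₀).1
      have hsq : (1 - δ)^2 ≤ (1 - P.b t₀)^2 := by nlinarith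
      have hδε : 1 - ε ≤ (1 - δ)^2 := by
        have h2 : δ ≤ ε/2 := min_le_left _ _
        nlinarith
      have hm := min_le_left 1 (l*s)
      linarith
    · push_neg at hdipc
      refine le_trans ?_ (P.slope_bound (F j) l hs.le (by linarith : 0 ≤ l - ε')
        hP.2.1 hP.2.2.1 ?_)
      · apply ENNReal.ofReal_le_ofReal
        have h1 : ε' ≤ ε/s := min_le_left _ _
        have h2 : ε' * s ≤ ε := by
          have := mul_le_mul_of_nonneg_right h1 hs.le
          rwa [div_mul_cancel₀ ε (ne_of_gt hs)] at this
        have hm := min_le_right 1 (l*s)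
        nlinarith
      · intro t ht
        exact hJ j hj (P.b t) (hdipc t ⟨ht.1.le, ht.2.le⟩) (hP.1 t ⟨ht.1.le, ht.2.le⟩).2
  by_cases hsign : 0 ≤ min 1 (l*s) - ε
  · have hinf : ENNReal.ofReal (min 1 (l*s) - ε)
        ≤ ⨅ (P : H1Pair 1) (_ : P.Admissible s), surfEnergy (F j) l P := le_iInf₂ hbound
    have := ENNReal.toReal_mono (inf_ne_top (F j) l s hl.le hs.le) hinf
    rwa [ENNReal.toReal_ofReal hsign] at this
  · push_neg at hsign
    exact le_trans hsign.le ENNReal.toReal_nonneg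

/-- If `(f_j)` is a sequence of admissible damage functions with the
same limit value `ℓ`, `f_j ≤ f_{j+1}` pointwise on `[0,1)`, and `f_j(s) ↑ ∞` for every
`s ∈ (0,1)`, then the surface energy densities satisfy `g_j ≤ g_{j+1}` pointwise and
`g_j(s) ↑ min(1, ℓ s)` for every `s ∈ [0,∞)`. -/
theorem surfDensity_seq_increasing_to_dugdale (F : ℕ → ℝ → ℝ) (l : ℝ)
    (hadm : ∀ j, AdmissibleDamage (F j) l)
    (hmono : ∀ j, ∀ x ∈ Set.Ico (0:ℝ) 1, F j x ≤ F (j+1) x)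
    (hlim : ∀ x ∈ Set.Ioo (0:ℝ) 1,
      Filter.Tendsto (fun j => F j x) Filter.atTop Filter.atTop) :
    (∀ j, ∀ s : ℝ, 0 ≤ s → surfDensity (F j) l s ≤ surfDensity (F (j+1)) l s) ∧
    (∀ s : ℝ, 0 ≤ s →
      Filter.Tendsto (fun j => surfDensity (F j) l s) Filter.atTop
        (nhds (min 1 (l * s)))) := by
  have hl : 0 < l := (hadm 0).2.2.2.2.1
  constructor
  · intro j s hs
    exact surfDensity_mono (F j) (F (j+1)) l s hl.le (hmono j) ((hadm j).2.2.1) hs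
  · intro s hs
    rcases eq_or_lt_of_le hs with heq | hs
    · have hz : ∀ j : ℕ, surfDensity (F j) l s = 0 := fun j =>
        le_antisymm (by simpa [← heq] using surfDensity_le_ls (F j) l s hl.le hs)
          ENNReal.toReal_nonneg
      have hmin : min 1 (l * s) = 0 := by rw [← heq]; simp
      rw [hmin]
      simpa [hz] using (tendsto_const_nhds : Filter.Tendsto (fun _ : ℕ => (0:ℝ)) _ _)
    · rw [Metric.tendsto_atTop]
      intro ε hε
      obtain ⟨J, hJ⟩ := eventually_lower F l hadm hmono hlim s (ε/2) hs (by linarith)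
      refine ⟨J, fun n hn => ?_⟩
      have hub : surfDensity (F n) l s ≤ min 1 (l*s) :=
        le_min (surfDensity_le_one (F n) l s (hadm n) hs.le)
          (surfDensity_le_ls (F n) l s hl.le hs.le)
      have hlb := hJ n hn
      rw [Real.dist_eq, abs_of_nonpos (by linarith)]
      linarith
end

section
/- Let (f_j) be a sequence of admissible damage functions, each with the same limit value ℓ ∈ (0,∞) of (1−s)f_j(s) as s → 1⁻, such that f_j ≤ f_{j+1} pointwise and f_j(s) ↑ ∞ for every s ∈ (0,1). Then for every δ ∈ (0,1), lim_{j→∞} inf_{t ∈ [δ,1)} (1−t) f_j(t) = ℓ. -/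
open MeasureTheory Set Filter Topology

/-- If `(f_j)` is a sequence of admissible damage functions with the
same limit value `ℓ`, `f_j ≤ f_{j+1}` pointwise on `[0,1)`, and `f_j(s) ↑ ∞` for every
`s ∈ (0,1)`, then for every `δ ∈ (0,1)`,
`lim_{j→∞} inf_{t ∈ [δ,1)} (1−t) f_j(t) = ℓ`. -/
theorem surfDensity_seq_inf_tendsto (F : ℕ → ℝ → ℝ) (l : ℝ)
    (hadm : ∀ j, AdmissibleDamage (F j) l)
    (hmono : ∀ j, ∀ x ∈ Set.Ico (0:ℝ) 1, F j x ≤ F (j+1) x)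
    (hlim : ∀ x ∈ Set.Ioo (0:ℝ) 1,
      Filter.Tendsto (fun j => F j x) Filter.atTop Filter.atTop) :
    ∀ δ ∈ Set.Ioo (0:ℝ) 1,
      Filter.Tendsto (fun j => sInf ((fun t => (1 - t) * F j t) '' Set.Ico δ 1))
        Filter.atTop (nhds l) := by

  intro δ hδ
  obtain ⟨hδ0, hδ1⟩ := hδ
  have hF0 : ∀ j, ∀ t ∈ Set.Ico δ 1, 0 ≤ F j t := fun j t ht =>
    (hadm j).2.2.1 t ⟨le_trans hδ0.le ht.1, ht.2⟩
  have hbdd : ∀ j, BddBelow ((fun t => (1-t) * F j t) '' Set.Ico δ 1) := by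
    intro j
    refine ⟨0, ?_⟩
    rintro y ⟨t, ht, rfl⟩
    exact mul_nonneg (by linarith [ht.2]) (hF0 j t ht)
  have hne : ∀ j, ((fun t => (1-t) * F j t) '' Set.Ico δ 1).Nonempty :=
    fun j => ⟨_, ⟨δ, ⟨le_refl δ, hδ1⟩, rfl⟩⟩
  have hmonoj : ∀ x ∈ Set.Ico (0:ℝ) 1, Monotone fun j => F j x := fun x hx =>
    monotone_nat_of_le_succ (fun j => hmono j x hx)
  have hub : ∀ j, sInf ((fun t => (1 - t) * F j t) '' Set.Ico δ 1) ≤ l := by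
    intro j
    refine ge_of_tendsto (hadm j).2.2.2.2.2 ?_
    have h1 : ∀ᶠ t in nhdsWithin 1 (Set.Iio 1), δ < t :=
      (eventually_gt_nhds hδ1).filter_mono nhdsWithin_le_nhds
    have h2 : ∀ᶠ t in nhdsWithin 1 (Set.Iio 1), t ∈ Set.Iio (1:ℝ) :=
      eventually_mem_nhdsWithin
    filter_upwards [h1, h2] with t h1t h2t
    exact csInf_le (hbdd j) ⟨t, ⟨h1t.le, h2t⟩, rfl⟩
  rw [tendsto_order]
  constructor
  · intro a ha
    set a' := (a + l) / 2 with ha'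
    have haa' : a < a' := by rw [ha']; linarith
    have ha'l : a' < l := by rw [ha']; linarith
    have hev : {t : ℝ | a' < (1 - t) * F 0 t ∧ δ < t} ∈ nhdsWithin 1 (Set.Iio 1) := by
      have h1 : ∀ᶠ t in nhdsWithin 1 (Set.Iio 1), a' < (1 - t) * F 0 t :=
        (hadm 0).2.2.2.2.2.eventually (eventually_gt_nhds ha'l)
      have h2 : ∀ᶠ t in nhdsWithin 1 (Set.Iio 1), δ < t :=
        (eventually_gt_nhds hδ1).filter_mono nhdsWithin_le_nhds
      exact h1.and h2
    obtain ⟨c, hc1, hc⟩ := mem_nhdsLT_iff_exists_Ioo_subset.1 hev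
    set t₂ : ℝ := (max c δ + 1) / 2 with ht₂def
    have hc'1 : max c δ < 1 := max_lt hc1 hδ1
    have ht₂1 : t₂ < 1 := by rw [ht₂def]; linarith
    have hct₂ : max c δ < t₂ := by rw [ht₂def]; linarith
    have ht₂pos : 0 < 1 - t₂ := by linarith
    have hN : ∀ᶠ j in Filter.atTop, a' / (1 - t₂) < F j δ :=
      (hlim δ ⟨hδ0, hδ1⟩).eventually_gt_atTop _
    filter_upwards [hN] with j hj
    refine lt_of_lt_of_le haa' (le_csInf (hne j) ?_)
    rintro y ⟨t, ht, rfl⟩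
    show a' ≤ (1 - t) * F j t
    have ht0 : (0:ℝ) ≤ t := le_trans hδ0.le ht.1
    by_cases htt : t ≤ t₂
    · have hFδt : F j δ ≤ F j t :=
        (hadm j).2.1 ⟨hδ0.le, hδ1⟩ ⟨ht0, ht.2⟩ ht.1
      have h2 : a' < (1 - t₂) * F j δ := by
        have := mul_lt_mul_of_pos_left hj ht₂pos
        rwa [mul_div_cancel₀ _ (ne_of_gt ht₂pos)] at this
      have h3 : (1 - t₂) * F j δ ≤ (1 - t) * F j t := by
        have hFt : 0 ≤ F j t := hF0 j t ht
        nlinarith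
      linarith
    · push_neg at htt
      have htc : t ∈ Set.Ioo c 1 :=
        ⟨lt_trans (lt_of_le_of_lt (le_max_left c δ) hct₂) htt, ht.2⟩
      have h1 := (hc htc).1
      have h2 : F 0 t ≤ F j t := hmonoj t ⟨ht0, ht.2⟩ (Nat.zero_le j)
      have h3 : (1 - t) * F 0 t ≤ (1 - t) * F j t :=
        mul_le_mul_of_nonneg_left h2 (by linarith [ht.2])
      linarith
  · intro a ha
    exact Filter.Eventually.of_forall (fun j => lt_of_le_of_lt (hub j) ha)
end
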